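/- arXiv:2604.15238 — 15 statements merged into one kernel-verified Lean document; each statement's English description precedes it below -/
import Mathlib

section
/- Separation principle for contracting controllers and observers (quadratic-norm version). Let F : ℝⁿ×ℝᵐ → ℝⁿ, h : ℝⁿ → ℝᵖ, K : ℝⁿ → ℝᵐ, L : ℝⁿ×ℝᵐ×ℝᵖ → ℝⁿ, let P_X, P_O ∈ ℝ^{n×n} and P_U ∈ ℝ^{m×m} be symmetric positive definite, and let c_K, c_O > 0 and ℓ_K, ℓ_u ≥ 0. Assume: (A1) (F(a,K(a))−F(b,K(b)))ᵀ P_X (a−b) ≤ −c_K ‖a−b‖²_{P_X} for all a,b ∈ ℝⁿ, and x* ∈ ℝⁿ satisfies F(x*,K(x*)) = 0; (A2) ‖K(a)−K(b)‖_{P_U} ≤ ℓ_K ‖a−b‖_{P_O} for all a,b, and ‖F(a,u)−F(a,u′)‖_{P_X} ≤ ℓ_u ‖u−u′‖_{P_U} for all a,u,u′; (A3) L(a,u,h(a)) = F(a,u) for all a,u; (A4) (L(a,u,y)−L(b,u,y))ᵀ P_O (a−b) ≤ −c_O ‖a−b‖²_{P_O} for all a,b,u,y. Suppose x, ξ : [0,∞)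 → ℝⁿ are differentiable and satisfy x′(t) = F(x(t), K(ξ(t))) and ξ′(t) = L(ξ(t), K(ξ(t)), h(x(t))) for all t ≥ 0. Then for all t ≥ 0: ‖ξ(t)−x(t)‖_{P_O} ≤ e^{−c_O t} ‖ξ(0)−x(0)‖_{P_O}, and ‖x(t)−x*‖_{P_X} ≤ e^{−c_K t} ‖x(0)−x*‖_{P_X} + ℓ_u ℓ_K ‖ξ(0)−x(0)‖_{P_O} β(t), where β(t) = (e^{−c_O t} − e^{−c_K t})/(c_K − c_O) if c_K ≠ c_O, and β(t) = t e^{−c_K t} if c_K = c_O. -/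
/-!
Both errors are controlled through the quadratic Lyapunov functions `‖·‖²_P`. By (A3) the
estimation error `ξ - x` is driven by the observer vector field alone, so (A4) makes it decay at
rate `c_O` whatever the input. The plant then follows the contracting closed loop `x' = F(x, K x)`
perturbed by `F(x, K ξ) - F(x, K x)`, whose `P_X`-norm is at most
`ℓ_u ℓ_K e^{-c_O t} ‖ξ(0) - x(0)‖_{P_O}` by (A2); so `D⁺‖x - x*‖ ≤ -c_K ‖x - x*‖ + (that bound)`,
and variation of constants gives the claim, with `β(t) = e^{-c_K t} ∫₀ᵗ e^{(c_K - c_O) s} ds`.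
-/

open Matrix

/-- The `P`-weighted quadratic norm `‖v‖_P = √(vᵀ P v)`. -/
noncomputable def pnorm {n : ℕ} (P : Matrix (Fin n) (Fin n) ℝ) (v : Fin n → ℝ) : ℝ :=
  Real.sqrt (v ⬝ᵥ P *ᵥ v)

section DotProduct

variable {ι : Type*} [Fintype ι] {v w : ℝ → ι → ℝ} {v' w' : ι → ℝ} {t : ℝ}

theorem HasDerivAt.dotProduct (hv : HasDerivAt v v' t) (hw : HasDerivAt w w' t) :
    HasDerivAt (fun s => v s ⬝ᵥ w s) (v' ⬝ᵥ w t + v t ⬝ᵥ w') t := by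
  show HasDerivAt (fun s => ∑ i, v s i * w s i) (∑ i, v' i * w t i + ∑ i, v t i * w' i) t
  rw [← Finset.sum_add_distrib]
  exact HasDerivAt.fun_sum fun i _ => (hasDerivAt_pi.mp hv i).mul (hasDerivAt_pi.mp hw i)

theorem HasDerivAt.mulVec (A : Matrix ι ι ℝ) (hw : HasDerivAt w w' t) :
    HasDerivAt (fun s => A *ᵥ w s) (A *ᵥ w') t :=
  A.mulVecLin.toContinuousLinearMap.hasFDerivAt.comp_hasDerivAt t hw

theorem HasDerivAt.dotProduct_mulVec_self {P : Matrix ι ι ℝ} (hP : P.IsHermitian)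
    (hv : HasDerivAt v v' t) :
    HasDerivAt (fun s => v s ⬝ᵥ P *ᵥ v s) (2 * (v' ⬝ᵥ P *ᵥ v t)) t := by
  convert hv.dotProduct (hv.mulVec P) using 1
  rw [dotProduct_mulVec _ P v', ← mulVec_transpose, ← conjTranspose_eq_transpose_of_trivial,
    hP.eq, dotProduct_comm]
  ring

end DotProduct

lemma hasDerivAt_exp_mul (c s : ℝ) :
    HasDerivAt (fun s => Real.exp (c * s)) (c * Real.exp (c * s)) s := by
  simpa [mul_comm] using ((hasDerivAt_id s).const_mul c).exp

lemma le_exp_mul_of_hasDerivAt_le {φ φ' f A : ℝ → ℝ} {c t : ℝ}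
    (hφ : ∀ s, 0 ≤ s → HasDerivAt φ (φ' s) s) (hφ' : ∀ s, 0 ≤ s → φ' s ≤ -c * φ s + f s)
    (hA : ∀ s, 0 ≤ s → HasDerivAt A (Real.exp (c * s) * f s) s) (ht : 0 ≤ t) :
    φ t ≤ Real.exp (-c * t) * (φ 0 + A t - A 0) := by
  set W : ℝ → ℝ := fun s => Real.exp (c * s) * φ s - A s
  set W' : ℝ → ℝ := fun s => Real.exp (c * s) * (φ' s + c * φ s - f s)
  have hW : ∀ s, 0 ≤ s → HasDerivAt W (W' s) s := fun s hs =>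
    (((hasDerivAt_exp_mul c s).mul (hφ s hs)).sub (hA s hs)).congr_deriv (by ring)
  have hanti : AntitoneOn W (Set.Ici 0) := by
    refine antitoneOn_of_hasDerivWithinAt_nonpos (f' := W') (convex_Ici 0)
      (fun s hs => (hW s hs).continuousAt.continuousWithinAt) (fun s hs => ?_) (fun s hs => ?_)
    · rw [interior_Ici] at hs
      exact (hW s hs.le).hasDerivWithinAt
    · rw [interior_Ici] at hs
      have := hφ' s hs.le
      exact mul_nonpos_of_nonneg_of_nonpos (Real.exp_pos _).le (by linarith)
  have hWt : W t ≤ W 0 := hanti Set.self_mem_Ici ht ht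
  have hexp : Real.exp (-c * t) * Real.exp (c * t) = 1 := by
    rw [← Real.exp_add]; simp
  simp only [W, mul_zero, Real.exp_zero, one_mul] at hWt
  calc φ t = Real.exp (-c * t) * (Real.exp (c * t) * φ t) := by rw [← mul_assoc, hexp, one_mul]
    _ ≤ Real.exp (-c * t) * (φ 0 + A t - A 0) := by gcongr; linarith

lemma sqrt_le_exp_mul_of_hasDerivAt_le {U U' g A : ℝ → ℝ} {c t : ℝ} (hc : 0 ≤ c)
    (hU : ∀ s, 0 ≤ s → HasDerivAt U (U' s) s) (hU₀ : ∀ s, 0 ≤ s → 0 ≤ U s)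
    (hU' : ∀ s, 0 ≤ s → U' s ≤ -2 * c * U s + 2 * g s * √(U s)) (hg : ∀ s, 0 ≤ s → 0 ≤ g s)
    (hA : ∀ s, 0 ≤ s → HasDerivAt A (Real.exp (c * s) * g s) s) (ht : 0 ≤ t) :
    √(U t) ≤ Real.exp (-c * t) * (√(U 0) + A t - A 0) := by
  -- `√U` need not be differentiable where `U` vanishes; compare `√(U + ε²)` instead.
  refine le_of_forall_pos_le_add fun ε hε => ?_
  set φ : ℝ → ℝ := fun s => √(U s + ε ^ 2)
  have hφ_pos : ∀ s, 0 ≤ s → 0 < φ s := fun s hs =>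
    Real.sqrt_pos.mpr (by linarith [hU₀ s hs, pow_pos hε 2])
  have hφ_sq : ∀ s, 0 ≤ s → φ s ^ 2 = U s + ε ^ 2 := fun s hs =>
    Real.sq_sqrt (by linarith [hU₀ s hs, pow_pos hε 2])
  have hφ_ge : ∀ s, 0 ≤ s → ε ≤ φ s := fun s hs =>
    Real.le_sqrt_of_sq_le (by linarith [hU₀ s hs])
  have hφ_ge_sqrt : ∀ s, √(U s) ≤ φ s := fun s => Real.sqrt_le_sqrt (by nlinarith)
  have hφ : ∀ s, 0 ≤ s → HasDerivAt φ (U' s / (2 * φ s)) s := fun s hs =>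
    ((hU s hs).add_const _).sqrt (by linarith [hU₀ s hs, pow_pos hε 2])
  have hφ' : ∀ s, 0 ≤ s → U' s / (2 * φ s) ≤ -c * φ s + (g s + c * ε) := by
    intro s hs
    rw [div_le_iff₀ (by linarith [hφ_pos s hs])]
    nlinarith [hU' s hs, hφ_sq s hs, mul_le_mul_of_nonneg_left (hφ_ge_sqrt s) (hg s hs),
      mul_le_mul_of_nonneg_left (hφ_ge s hs) (mul_nonneg hc hε.le)]
  have hAε : ∀ s, 0 ≤ s → HasDerivAt (fun s => A s + ε * Real.exp (c * s))
      (Real.exp (c * s) * (g s + c * ε)) s := fun s hs =>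
    ((hA s hs).add ((hasDerivAt_exp_mul c s).const_mul ε)).congr_deriv (by ring)
  have hφ₀ : φ 0 ≤ √(U 0) + ε :=
    Real.sqrt_le_iff.mpr ⟨by positivity,
      by nlinarith [Real.sq_sqrt (hU₀ 0 le_rfl), Real.sqrt_nonneg (U 0)]⟩
  have hexp : Real.exp (-c * t) * Real.exp (c * t) = 1 := by
    rw [← Real.exp_add]; simp
  calc √(U t) ≤ φ t := hφ_ge_sqrt t
    _ ≤ Real.exp (-c * t) * (φ 0 + (A t + ε * Real.exp (c * t)) - (A 0 + ε * Real.exp (c * 0))) :=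
      le_exp_mul_of_hasDerivAt_le hφ hφ' hAε ht
    _ ≤ Real.exp (-c * t) * (√(U 0) + A t - A 0) + ε := by
      have := mul_le_mul_of_nonneg_left hφ₀ (Real.exp_pos (-c * t)).le
      simp only [mul_zero, Real.exp_zero]
      nlinarith

section WeightedNorm

variable {n : ℕ} {P : Matrix (Fin n) (Fin n) ℝ}

lemma pnorm_nonneg (P : Matrix (Fin n) (Fin n) ℝ) (v : Fin n → ℝ) : 0 ≤ pnorm P v :=
  Real.sqrt_nonneg _

lemma pnorm_sq (hP : P.PosSemidef) (v : Fin n → ℝ) : pnorm P v ^ 2 = v ⬝ᵥ P *ᵥ v :=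
  Real.sq_sqrt (by simpa using hP.dotProduct_mulVec_nonneg v)

lemma dotProduct_mulVec_le_pnorm_mul_pnorm (hP : P.PosSemidef) (a b : Fin n → ℝ) :
    a ⬝ᵥ P *ᵥ b ≤ pnorm P a * pnorm P b := by
  unfold pnorm
  let _ := P.toSeminormedAddCommGroup hP
  let _ := P.toInnerProductSpace hP
  have h := real_inner_le_norm a b
  rw [norm_eq_sqrt_real_inner a, norm_eq_sqrt_real_inner b] at h
  change (P *ᵥ b) ⬝ᵥ star a ≤ √((P *ᵥ a) ⬝ᵥ star a) * √((P *ᵥ b) ⬝ᵥ star b) at h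
  simpa only [star_trivial, dotProduct_comm _ a, dotProduct_comm _ b] using h

lemma pnorm_le_exp_mul_of_hasDerivAt (hP : P.PosSemidef) {z z' : ℝ → Fin n → ℝ}
    {g A : ℝ → ℝ} {c t : ℝ} (hc : 0 ≤ c) (hz : ∀ s, 0 ≤ s → HasDerivAt z (z' s) s)
    (hz' : ∀ s, 0 ≤ s → z' s ⬝ᵥ P *ᵥ z s ≤ -c * pnorm P (z s) ^ 2 + g s * pnorm P (z s))
    (hg : ∀ s, 0 ≤ s → 0 ≤ g s) (hA : ∀ s, 0 ≤ s → HasDerivAt A (Real.exp (c * s) * g s) s)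
    (ht : 0 ≤ t) :
    pnorm P (z t) ≤ Real.exp (-c * t) * (pnorm P (z 0) + A t - A 0) := by
  refine sqrt_le_exp_mul_of_hasDerivAt_le hc
    (fun s hs => (hz s hs).dotProduct_mulVec_self hP.isHermitian)
    (fun s _ => by simpa using hP.dotProduct_mulVec_nonneg (z s)) (fun s hs => ?_) hg hA ht
  have := hz' s hs
  rw [pnorm_sq hP] at this
  unfold pnorm at this
  linarith

end WeightedNorm

noncomputable def expPrimitive (a s : ℝ) : ℝ :=
  if a = 0 then s else Real.exp (a * s) / a

lemma hasDerivAt_expPrimitive (a s : ℝ) :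
    HasDerivAt (expPrimitive a) (Real.exp (a * s)) s := by
  unfold expPrimitive
  split_ifs with ha
  · simpa [ha] using hasDerivAt_id' s
  · exact ((hasDerivAt_exp_mul a s).div_const a).congr_deriv (by field_simp)

lemma exp_neg_mul_mul_expPrimitive_sub (a b t : ℝ) :
    Real.exp (-a * t) * (expPrimitive (a - b) t - expPrimitive (a - b) 0) =
      if a = b then t * Real.exp (-a * t)
      else (Real.exp (-b * t) - Real.exp (-a * t)) / (a - b) := by
  unfold expPrimitive
  split_ifs with hab hab' hab'
  · ring
  · exact absurd (sub_eq_zero.mp hab) hab'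
  · exact absurd (sub_eq_zero.mpr hab') hab
  · have : Real.exp (-a * t) * Real.exp ((a - b) * t) = Real.exp (-b * t) := by
      rw [← Real.exp_add]; ring_nf
    rw [mul_zero, Real.exp_zero, ← this, ← sub_div, mul_div_assoc', mul_sub, mul_one]

section ClosedLoop

variable {n : ℕ}

theorem pnorm_observer_error_le {m p : ℕ} {F : (Fin n → ℝ) → (Fin m → ℝ) → (Fin n → ℝ)}
    {h : (Fin n → ℝ) → (Fin p → ℝ)} {L : (Fin n → ℝ) → (Fin m → ℝ) → (Fin p → ℝ) → (Fin n → ℝ)}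
    {P : Matrix (Fin n) (Fin n) ℝ} (hP : P.PosSemidef) {c : ℝ} (hc : 0 ≤ c)
    (hmatch : ∀ a u, L a u (h a) = F a u)
    (hcontr : ∀ a b u y, (L a u y - L b u y) ⬝ᵥ P *ᵥ (a - b) ≤ -c * pnorm P (a - b) ^ 2)
    {u : ℝ → Fin m → ℝ} {x ξ : ℝ → Fin n → ℝ}
    (hx : ∀ s, 0 ≤ s → HasDerivAt x (F (x s) (u s)) s)
    (hξ : ∀ s, 0 ≤ s → HasDerivAt ξ (L (ξ s) (u s) (h (x s))) s) {t : ℝ} (ht : 0 ≤ t) :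
    pnorm P (ξ t - x t) ≤ Real.exp (-c * t) * pnorm P (ξ 0 - x 0) := by
  simpa using pnorm_le_exp_mul_of_hasDerivAt hP hc (g := 0) (A := 0)
    (fun s hs => (hξ s hs).sub (hmatch (x s) (u s) ▸ hx s hs))
    (fun s _ => by simpa using hcontr (ξ s) (x s) (u s) (h (x s)))
    (fun _ _ => le_rfl) (fun s _ => by simp) ht

theorem pnorm_sub_le_of_contracting_of_decaying_disturbance {P : Matrix (Fin n) (Fin n) ℝ}
    (hP : P.PosSemidef) {f : (Fin n → ℝ) → Fin n → ℝ} {w : ℝ → Fin n → ℝ} {xs : Fin n → ℝ}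
    {c d C : ℝ} (hc : 0 ≤ c) (hC : 0 ≤ C)
    (hf : ∀ a b, (f a - f b) ⬝ᵥ P *ᵥ (a - b) ≤ -c * pnorm P (a - b) ^ 2) (hxs : f xs = 0)
    (hw : ∀ s, 0 ≤ s → pnorm P (w s) ≤ C * Real.exp (-d * s))
    {x : ℝ → Fin n → ℝ} (hx : ∀ s, 0 ≤ s → HasDerivAt x (f (x s) + w s) s) {t : ℝ}
    (ht : 0 ≤ t) :
    pnorm P (x t - xs) ≤ Real.exp (-c * t) * pnorm P (x 0 - xs) +
      C * (if c = d then t * Real.exp (-c * t)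
        else (Real.exp (-d * t) - Real.exp (-c * t)) / (c - d)) := by
  have hbound : ∀ s, 0 ≤ s → (f (x s) + w s) ⬝ᵥ P *ᵥ (x s - xs) ≤
      -c * pnorm P (x s - xs) ^ 2 + C * Real.exp (-d * s) * pnorm P (x s - xs) := by
    intro s hs
    rw [add_dotProduct, ← sub_zero (f (x s)), ← hxs]
    linarith [hf (x s) xs, dotProduct_mulVec_le_pnorm_mul_pnorm hP (w s) (x s - xs),
      mul_le_mul_of_nonneg_right (hw s hs) (pnorm_nonneg P (x s - xs))]
  have hA : ∀ s, 0 ≤ s → HasDerivAt (fun s => C * expPrimitive (c - d) s)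
      (Real.exp (c * s) * (C * Real.exp (-d * s))) s := fun s _ =>
    ((hasDerivAt_expPrimitive _ s).const_mul C).congr_deriv
      (by rw [mul_left_comm, ← Real.exp_add]; ring_nf)
  have := pnorm_le_exp_mul_of_hasDerivAt hP hc (fun s hs => (hx s hs).sub_const xs) hbound
    (fun s _ => by positivity) hA ht
  rw [← exp_neg_mul_mul_expPrimitive_sub]
  exact this.trans_eq (by ring)

end ClosedLoop

theorem separation_principle_general
    {n m p : ℕ}
    (F : (Fin n → ℝ) → (Fin m → ℝ) → (Fin n → ℝ))
    (h : (Fin n → ℝ) → (Fin p → ℝ))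
    (K : (Fin n → ℝ) → (Fin m → ℝ))
    (L : (Fin n → ℝ) → (Fin m → ℝ) → (Fin p → ℝ) → (Fin n → ℝ))
    (PX PO : Matrix (Fin n) (Fin n) ℝ) (PU : Matrix (Fin m) (Fin m) ℝ)
    (hPX : PX.PosDef)
    (hPO : PO.PosDef)
    (cK cO ℓK ℓu : ℝ) (hcK : 0 < cK) (hcO : 0 < cO) (hℓK : 0 ≤ ℓK) (hℓu : 0 ≤ ℓu)
    (xs : Fin n → ℝ)
    -- (A1) plant contraction under state feedback, with equilibrium xs
    (hA1 : ∀ a b : Fin n → ℝ,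
      (F a (K a) - F b (K b)) ⬝ᵥ PX *ᵥ (a - b) ≤ -cK * (pnorm PX (a - b))^2)
    (hxs : F xs (K xs) = 0)
    -- (A2) Lipschitz controller and plant input
    (hA2K : ∀ a b : Fin n → ℝ, pnorm PU (K a - K b) ≤ ℓK * pnorm PO (a - b))
    (hA2u : ∀ (a : Fin n → ℝ) (u u' : Fin m → ℝ),
      pnorm PX (F a u - F a u') ≤ ℓu * pnorm PU (u - u'))
    -- (A3) plant-observer matching
    (hA3 : ∀ (a : Fin n → ℝ) (u : Fin m → ℝ), L a u (h a) = F a u)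
    -- (A4) observer contraction, uniformly in inputs
    (hA4 : ∀ (a b : Fin n → ℝ) (u : Fin m → ℝ) (y : Fin p → ℝ),
      (L a u y - L b u y) ⬝ᵥ PO *ᵥ (a - b) ≤ -cO * (pnorm PO (a - b))^2)
    -- closed loop trajectories
    (x ξ : ℝ → (Fin n → ℝ))
    (hx : ∀ t : ℝ, 0 ≤ t → HasDerivAt x (F (x t) (K (ξ t))) t)
    (hξ : ∀ t : ℝ, 0 ≤ t → HasDerivAt ξ (L (ξ t) (K (ξ t)) (h (x t))) t) :
    ∀ t : ℝ, 0 ≤ t →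
      pnorm PO (ξ t - x t) ≤ Real.exp (-cO * t) * pnorm PO (ξ 0 - x 0) ∧
      pnorm PX (x t - xs) ≤ Real.exp (-cK * t) * pnorm PX (x 0 - xs) +
        ℓu * ℓK * pnorm PO (ξ 0 - x 0) *
          (if cK = cO then t * Real.exp (-cK * t)
           else (Real.exp (-cO * t) - Real.exp (-cK * t)) / (cK - cO)) := by
  intro t ht
  have hobs : ∀ s, 0 ≤ s →
      pnorm PO (ξ s - x s) ≤ Real.exp (-cO * s) * pnorm PO (ξ 0 - x 0) := fun s hs =>
    pnorm_observer_error_le hPO.posSemidef hcO.le hA3 hA4 (u := fun s => K (ξ s)) hx hξ hs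
  refine ⟨hobs t ht, ?_⟩
  have hinput : ∀ s, 0 ≤ s → pnorm PX (F (x s) (K (ξ s)) - F (x s) (K (x s))) ≤
      ℓu * ℓK * pnorm PO (ξ 0 - x 0) * Real.exp (-cO * s) := fun s hs =>
    calc pnorm PX (F (x s) (K (ξ s)) - F (x s) (K (x s)))
        ≤ ℓu * (ℓK * pnorm PO (ξ s - x s)) := (hA2u _ _ _).trans (by gcongr; exact hA2K _ _)
      _ ≤ ℓu * (ℓK * (Real.exp (-cO * s) * pnorm PO (ξ 0 - x 0))) := by gcongr; exact hobs s hs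
      _ = _ := by ring
  exact pnorm_sub_le_of_contracting_of_decaying_disturbance hPX.posSemidef hcK.le
    (by have := pnorm_nonneg PO (ξ 0 - x 0); positivity) hA1 hxs hinput
    (fun s hs => by simpa using hx s hs) ht

/-- Separation principle for contracting controllers and observers. -/
theorem separation_principle
    {n m p : ℕ}
    (F : (Fin n → ℝ) → (Fin m → ℝ) → (Fin n → ℝ))
    (h : (Fin n → ℝ) → (Fin p → ℝ))
    (K : (Fin n → ℝ) → (Fin m → ℝ))
    (L : (Fin n → ℝ) → (Fin m → ℝ) → (Fin p → ℝ) → (Fin n → ℝ))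
    (PX PO : Matrix (Fin n) (Fin n) ℝ) (PU : Matrix (Fin m) (Fin m) ℝ)
    (hPXs : PX.IsSymm) (hPX : PX.PosDef)
    (hPOs : PO.IsSymm) (hPO : PO.PosDef)
    (hPUs : PU.IsSymm) (hPU : PU.PosDef)
    (cK cO ℓK ℓu : ℝ) (hcK : 0 < cK) (hcO : 0 < cO) (hℓK : 0 ≤ ℓK) (hℓu : 0 ≤ ℓu)
    (xs : Fin n → ℝ)
    -- (A1) plant contraction under state feedback, with equilibrium xs
    (hA1 : ∀ a b : Fin n → ℝ,
      (F a (K a) - F b (K b)) ⬝ᵥ PX *ᵥ (a - b) ≤ -cK * (pnorm PX (a - b))^2)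
    (hxs : F xs (K xs) = 0)
    -- (A2) Lipschitz controller and plant input
    (hA2K : ∀ a b : Fin n → ℝ, pnorm PU (K a - K b) ≤ ℓK * pnorm PO (a - b))
    (hA2u : ∀ (a : Fin n → ℝ) (u u' : Fin m → ℝ),
      pnorm PX (F a u - F a u') ≤ ℓu * pnorm PU (u - u'))
    -- (A3) plant-observer matching
    (hA3 : ∀ (a : Fin n → ℝ) (u : Fin m → ℝ), L a u (h a) = F a u)
    -- (A4) observer contraction, uniformly in inputs
    (hA4 : ∀ (a b : Fin n → ℝ) (u : Fin m → ℝ) (y : Fin p → ℝ),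
      (L a u y - L b u y) ⬝ᵥ PO *ᵥ (a - b) ≤ -cO * (pnorm PO (a - b))^2)
    -- closed loop trajectories
    (x ξ : ℝ → (Fin n → ℝ))
    (hx : ∀ t : ℝ, 0 ≤ t → HasDerivAt x (F (x t) (K (ξ t))) t)
    (hξ : ∀ t : ℝ, 0 ≤ t → HasDerivAt ξ (L (ξ t) (K (ξ t)) (h (x t))) t) :
    ∀ t : ℝ, 0 ≤ t →
      pnorm PO (ξ t - x t) ≤ Real.exp (-cO * t) * pnorm PO (ξ 0 - x 0) ∧
      pnorm PX (x t - xs) ≤ Real.exp (-cK * t) * pnorm PX (x 0 - xs) +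
        ℓu * ℓK * pnorm PO (ξ 0 - x 0) *
          (if cK = cO then t * Real.exp (-cK * t)
           else (Real.exp (-cO * t) - Real.exp (-cK * t)) / (cK - cO)) :=
  separation_principle_general F h K L PX PO PU hPX hPO cK cO ℓK ℓu hcK hcO hℓK hℓu xs hA1 hxs hA2K
    hA2u hA3 hA4 x ξ hx hξ
end

section
/- Absolute contractivity of continuous-time Lur'e systems. Let A ∈ ℝ^{n×n}, B ∈ ℝ^{n×m}, H ∈ ℝ^{m×n}, let P ∈ ℝ^{n×n} be symmetric positive definite, let c > 0, let M ∈ ℝ^{2m×2m} be a symmetric incremental multiplier for Ψ : ℝᵐ → ℝᵐ, and define M_H = [[H, 0],[0, I_m]]ᵀ M [[H, 0],[0, I_m]] ∈ ℝ^{(n+m)×(n+m)}. If the block matrix [[PA + AᵀP + 2cP, PB],[BᵀP, 0]] + M_H is negative semidefinite, then the map F(x) = Ax + BΨ(Hx) satisfies (F(x) − F(x̃))ᵀ P (x − x̃) ≤ −c (x − x̃)ᵀ P (x − x̃) for all x, x̃ ∈ ℝⁿ (i.e., the system ẋ = Ax + BΨ(Hx) is strongly infinitesimally contracting with rate c with respect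 to ‖·‖_P). -/
/-!
Evaluate the LMI at `v = (x - x̃, Ψ(Hx) - Ψ(Hx̃))`. The block part of the quadratic form is
`2 (F x - F x̃)ᵀ P (x - x̃) + 2c ‖x - x̃‖²_P`, while the `M_H` part is the multiplier inequality at
`Hx, Hx̃`, hence nonnegative; negative semidefiniteness then forces the block part to be `≤ 0`.
-/

open Matrix

namespace Matrix

section QuadraticForms

variable {l n m R : Type*} [Fintype n]

lemma dotProduct_mulVec_nonpos_of_posSemidef_neg [CommRing R] [PartialOrder R] [IsOrderedRing R]
    [StarRing R] [TrivialStar R] {X : Matrix n n R} (hX : (-X).PosSemidef) (v : n → R) :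
    v ⬝ᵥ X *ᵥ v ≤ 0 := by
  have := hX.dotProduct_mulVec_nonneg v
  rwa [star_trivial, neg_mulVec, dotProduct_neg, neg_nonneg] at this

variable [CommSemiring R]

lemma dotProduct_transpose_mul_mul_mulVec [Fintype m] (G : Matrix m n R) (M : Matrix m m R)
    (v : n → R) :
    v ⬝ᵥ (Gᵀ * M * G) *ᵥ v = (G *ᵥ v) ⬝ᵥ M *ᵥ (G *ᵥ v) := by
  rw [← mulVec_mulVec, ← mulVec_mulVec, dotProduct_transpose_mulVec, dotProduct_comm]

lemma fromBlocks_zero_zero_one_mulVec_sumElim [Fintype l] [DecidableEq l] (H : Matrix m n R)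
    (z : n → R) (w : l → R) :
    fromBlocks H (0 : Matrix m l R) (0 : Matrix l n R) 1 *ᵥ Sum.elim z w = Sum.elim (H *ᵥ z) w := by
  simp [fromBlocks_mulVec]

lemma IsSymm.dotProduct_mulVec_comm {P : Matrix n n R} (hP : P.IsSymm) (u v : n → R) :
    u ⬝ᵥ P *ᵥ v = v ⬝ᵥ P *ᵥ u := by
  rw [← dotProduct_transpose_mulVec, hP.eq]

end QuadraticForms

lemma IsSymm.sumElim_dotProduct_fromBlocks_mulVec_sumElim {n m R : Type*} [Fintype n] [Fintype m]
    [CommRing R] {P : Matrix n n R} (hP : P.IsSymm) (A Q : Matrix n n R) (B : Matrix n m R)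
    (z : n → R) (w : m → R) :
    Sum.elim z w ⬝ᵥ Matrix.fromBlocks (P * A + Aᵀ * P + Q) (P * B) (Bᵀ * P) 0 *ᵥ Sum.elim z w =
      2 * ((A *ᵥ z + B *ᵥ w) ⬝ᵥ P *ᵥ z) + z ⬝ᵥ Q *ᵥ z := by
  simp only [fromBlocks_mulVec, Sum.elim_comp_inl, Sum.elim_comp_inr, sumElim_dotProduct_sumElim,
    add_mulVec, zero_mulVec, add_zero, dotProduct_add, add_dotProduct, ← mulVec_mulVec]
  rw [dotProduct_transpose_mulVec, dotProduct_transpose_mulVec, dotProduct_comm (P *ᵥ z),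
    dotProduct_comm (P *ᵥ z), hP.dotProduct_mulVec_comm z, hP.dotProduct_mulVec_comm z]
  ring

end Matrix

theorem lure_cts_contraction_general
    {n m : ℕ}
    (A : Matrix (Fin n) (Fin n) ℝ) (B : Matrix (Fin n) (Fin m) ℝ)
    (H : Matrix (Fin m) (Fin n) ℝ)
    (P : Matrix (Fin n) (Fin n) ℝ) (hPs : P.IsSymm)
    (c : ℝ)
    (M : Matrix (Fin m ⊕ Fin m) (Fin m ⊕ Fin m) ℝ)
    (Ψ : (Fin m → ℝ) → (Fin m → ℝ))
    -- M is an incremental multiplier for Ψ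
    (hmult : ∀ x xt : Fin m → ℝ,
      0 ≤ (Sum.elim (x - xt) (Ψ x - Ψ xt)) ⬝ᵥ M *ᵥ (Sum.elim (x - xt) (Ψ x - Ψ xt)))
    -- the LMI condition
    (hLMI : (-(fromBlocks (P * A + Aᵀ * P + (2 * c) • P) (P * B) (Bᵀ * P)
            (0 : Matrix (Fin m) (Fin m) ℝ) +
        (fromBlocks H (0 : Matrix (Fin m) (Fin m) ℝ)
            (0 : Matrix (Fin m) (Fin n) ℝ) (1 : Matrix (Fin m) (Fin m) ℝ))ᵀ * M *
          fromBlocks H (0 : Matrix (Fin m) (Fin m) ℝ)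
            (0 : Matrix (Fin m) (Fin n) ℝ) (1 : Matrix (Fin m) (Fin m) ℝ))).PosSemidef) :
    ∀ x xt : Fin n → ℝ,
      ((A *ᵥ x + B *ᵥ Ψ (H *ᵥ x)) - (A *ᵥ xt + B *ᵥ Ψ (H *ᵥ xt))) ⬝ᵥ P *ᵥ (x - xt) ≤
        -c * ((x - xt) ⬝ᵥ P *ᵥ (x - xt)) := by
  intro x xt
  set z := x - xt
  set w := Ψ (H *ᵥ x) - Ψ (H *ᵥ xt)
  have hdiff : (A *ᵥ x + B *ᵥ Ψ (H *ᵥ x)) - (A *ᵥ xt + B *ᵥ Ψ (H *ᵥ xt)) = A *ᵥ z + B *ᵥ w := by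
    simp only [z, w, mulVec_sub]
    abel
  have hmultH : 0 ≤ Sum.elim (H *ᵥ z) w ⬝ᵥ M *ᵥ Sum.elim (H *ᵥ z) w := by
    simpa only [z, mulVec_sub] using hmult (H *ᵥ x) (H *ᵥ xt)
  have hneg := dotProduct_mulVec_nonpos_of_posSemidef_neg hLMI (Sum.elim z w)
  rw [add_mulVec, dotProduct_add, hPs.sumElim_dotProduct_fromBlocks_mulVec_sumElim,
    dotProduct_transpose_mul_mul_mulVec, fromBlocks_zero_zero_one_mulVec_sumElim, smul_mulVec,
    dotProduct_smul, smul_eq_mul] at hneg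
  rw [hdiff]
  linarith

/-- Absolute contractivity of continuous-time Lur'e systems. -/
theorem lure_cts_contraction
    {n m : ℕ}
    (A : Matrix (Fin n) (Fin n) ℝ) (B : Matrix (Fin n) (Fin m) ℝ)
    (H : Matrix (Fin m) (Fin n) ℝ)
    (P : Matrix (Fin n) (Fin n) ℝ) (hPs : P.IsSymm) (hP : P.PosDef)
    (c : ℝ) (hc : 0 < c)
    (M : Matrix (Fin m ⊕ Fin m) (Fin m ⊕ Fin m) ℝ) (hMs : M.IsSymm)
    (Ψ : (Fin m → ℝ) → (Fin m → ℝ))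
    -- M is an incremental multiplier for Ψ
    (hmult : ∀ x xt : Fin m → ℝ,
      0 ≤ (Sum.elim (x - xt) (Ψ x - Ψ xt)) ⬝ᵥ M *ᵥ (Sum.elim (x - xt) (Ψ x - Ψ xt)))
    -- the LMI condition
    (hLMI : (-(fromBlocks (P * A + Aᵀ * P + (2 * c) • P) (P * B) (Bᵀ * P)
            (0 : Matrix (Fin m) (Fin m) ℝ) +
        (fromBlocks H (0 : Matrix (Fin m) (Fin m) ℝ)
            (0 : Matrix (Fin m) (Fin n) ℝ) (1 : Matrix (Fin m) (Fin m) ℝ))ᵀ * M *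
          fromBlocks H (0 : Matrix (Fin m) (Fin m) ℝ)
            (0 : Matrix (Fin m) (Fin n) ℝ) (1 : Matrix (Fin m) (Fin m) ℝ))).PosSemidef) :
    ∀ x xt : Fin n → ℝ,
      ((A *ᵥ x + B *ᵥ Ψ (H *ᵥ x)) - (A *ᵥ xt + B *ᵥ Ψ (H *ᵥ xt))) ⬝ᵥ P *ᵥ (x - xt) ≤
        -c * ((x - xt) ⬝ᵥ P *ᵥ (x - xt)) :=
  lure_cts_contraction_general A B H P hPs c M Ψ hmult hLMI
end

section
/- Contractivity of the continuous-time firing-rate neural network with MONE activation. Let W ∈ ℝ^{n×n}, B ∈ ℝ^{n×m}, u ∈ ℝᵐ, let Ψ : ℝⁿ → ℝⁿ be a diagonal MONE map, let P ∈ ℝ^{n×n} be symmetric positive definite, Q ∈ ℝ^{n×n} diagonal positive definite, and c > 0. If the 2n×2n block matrix [[−2(1−c)P, P + WᵀQ],[P + QW, −2Q]] is negative semidefinite, then the vector field F(x) = −x + Ψ(Wx + Bu) satisfies (F(x) − F(x̃))ᵀ P (x − x̃) ≤ −c (x − x̃)ᵀ P (x − x̃) for all x, x̃ ∈ ℝⁿ,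 i.e., the firing-rate dynamics ẋ = −x + Ψ(Wx + Bu) are strongly infinitesimally contracting with rate c with respect to ‖·‖_P. -/
/-!
Put `e = x - x̃` and `Δ = Ψ(Wx + Bu) - Ψ(Wx̃ + Bu)`, so that `F x - F x̃ = -e + Δ`. Since every
`ψᵢ` has slopes in `[0, 1]`, `Δᵢ ((We)ᵢ - Δᵢ) ≥ 0`, and weighting by the positive diagonal of `Q`
gives `Δᵀ Q (We - Δ) ≥ 0`. Evaluating the negative semidefinite block matrix at `(e, Δ)` gives
`2 ΔᵀPe + 2 Δᵀ Q (We - Δ) ≤ 2 (1 - c) eᵀPe`, hence `ΔᵀPe ≤ (1 - c) eᵀPe`, which is the claim.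
-/

open Matrix

def SlopeRestricted (k₁ k₂ : ℝ) (f : ℝ → ℝ) : Prop :=
  ∀ s t : ℝ, k₁ * (s - t) ^ 2 ≤ (f s - f t) * (s - t) ∧ (f s - f t) * (s - t) ≤ k₂ * (s - t) ^ 2

theorem SlopeRestricted.sector_nonneg {k₁ k₂ : ℝ} {f : ℝ → ℝ} (hf : SlopeRestricted k₁ k₂ f)
    (s t : ℝ) : 0 ≤ (f s - f t - k₁ * (s - t)) * (k₂ * (s - t) - (f s - f t)) := by
  rcases eq_or_ne s t with rfl | hst
  · simp
  obtain ⟨hlow, hupp⟩ := hf s t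
  have hsq : 0 < (s - t) ^ 2 := by positivity [sub_ne_zero.mpr hst]
  refine nonneg_of_mul_nonneg_left ?_ hsq
  calc (0 : ℝ) ≤ ((f s - f t) * (s - t) - k₁ * (s - t) ^ 2) *
        (k₂ * (s - t) ^ 2 - (f s - f t) * (s - t)) :=
        mul_nonneg (sub_nonneg.mpr hlow) (sub_nonneg.mpr hupp)
    _ = _ := by ring

theorem Matrix.IsDiag.dotProduct_mulVec_nonneg {ι R : Type*} [Fintype ι] [CommSemiring R]
    [PartialOrder R] [IsOrderedRing R] {Q : Matrix ι ι R} (hQd : Q.IsDiag)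
    (hQ : ∀ i, 0 ≤ Q i i) {x y : ι → R} (hxy : ∀ i, 0 ≤ x i * y i) : 0 ≤ x ⬝ᵥ Q *ᵥ y := by
  classical
  rw [← hQd.diagonal_diag]
  refine Finset.sum_nonneg fun i _ => ?_
  rw [mulVec_diagonal, diag_apply, mul_left_comm]
  exact mul_nonneg (hQ i) (hxy i)

theorem Matrix.sumElim_dotProduct_fromBlocks_mulVec_sumElim {l m R : Type*} [Fintype l]
    [Fintype m] [NonUnitalNonAssocSemiring R] (A : Matrix l l R) (B : Matrix l m R)
    (C : Matrix m l R) (D : Matrix m m R) (x : l → R) (y : m → R) :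
    Sum.elim x y ⬝ᵥ fromBlocks A B C D *ᵥ Sum.elim x y =
      x ⬝ᵥ A *ᵥ x + x ⬝ᵥ B *ᵥ y + (y ⬝ᵥ C *ᵥ x + y ⬝ᵥ D *ᵥ y) := by
  rw [fromBlocks_mulVec, Sum.elim_comp_inl, Sum.elim_comp_inr, sumElim_dotProduct_sumElim,
    dotProduct_add, dotProduct_add, add_assoc]

theorem dotProduct_mulVec_le_of_lmi {ι : Type*} [Fintype ι] {P Q W : Matrix ι ι ℝ}
    (hPs : P.IsSymm) (hQs : Q.IsSymm) {c : ℝ}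
    (hLMI : (-(fromBlocks ((-(2 * (1 - c))) • P) (P + Wᵀ * Q) (P + Q * W)
        ((-2 : ℝ) • Q))).PosSemidef)
    {e Δ : ι → ℝ} (hsec : 0 ≤ Δ ⬝ᵥ Q *ᵥ (W *ᵥ e - Δ)) :
    Δ ⬝ᵥ P *ᵥ e ≤ (1 - c) * (e ⬝ᵥ P *ᵥ e) := by
  have hform := hLMI.dotProduct_mulVec_nonneg (Sum.elim e Δ)
  rw [star_trivial, neg_mulVec, dotProduct_neg, sumElim_dotProduct_fromBlocks_mulVec_sumElim]
    at hform
  have hcross : e ⬝ᵥ (P + Wᵀ * Q) *ᵥ Δ = Δ ⬝ᵥ (P + Q * W) *ᵥ e := by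
    rw [← dotProduct_transpose_mulVec, transpose_add, transpose_mul, transpose_transpose,
      hPs.eq, hQs.eq]
  rw [hcross, add_mulVec, dotProduct_add, ← mulVec_mulVec, smul_mulVec, smul_mulVec,
    dotProduct_smul, dotProduct_smul, smul_eq_mul, smul_eq_mul] at hform
  rw [mulVec_sub, dotProduct_sub] at hsec
  linarith

theorem frnn_cts_mone_contraction_general
    {n m : ℕ}
    (W : Matrix (Fin n) (Fin n) ℝ) (B : Matrix (Fin n) (Fin m) ℝ) (u : Fin m → ℝ)
    (Ψ : (Fin n → ℝ) → (Fin n → ℝ)) (ψ : Fin n → ℝ → ℝ)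
    -- Ψ is diagonal with components ψ i
    (hdiag : ∀ (x : Fin n → ℝ) (i : Fin n), Ψ x i = ψ i (x i))
    -- MONE: each component is slope-restricted in [0,1]
    (hslope : ∀ (i : Fin n) (s t : ℝ),
      0 * (s - t)^2 ≤ (ψ i s - ψ i t) * (s - t) ∧ (ψ i s - ψ i t) * (s - t) ≤ 1 * (s - t)^2)
    (P Q : Matrix (Fin n) (Fin n) ℝ)
    (hPs : P.IsSymm) (hQd : Q.IsDiag) (hQ : Q.PosDef)
    (c : ℝ)
    (hLMI : (-(fromBlocks ((-(2 * (1 - c))) • P) (P + Wᵀ * Q) (P + Q * W)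
        ((-2 : ℝ) • Q))).PosSemidef) :
    ∀ x xt : Fin n → ℝ,
      ((-x + Ψ (W *ᵥ x + B *ᵥ u)) - (-xt + Ψ (W *ᵥ xt + B *ᵥ u))) ⬝ᵥ P *ᵥ (x - xt) ≤
        -c * ((x - xt) ⬝ᵥ P *ᵥ (x - xt)) := by
  intro x xt
  set Δ := Ψ (W *ᵥ x + B *ᵥ u) - Ψ (W *ᵥ xt + B *ᵥ u)
  have hsec : 0 ≤ Δ ⬝ᵥ Q *ᵥ (W *ᵥ (x - xt) - Δ) := by
    refine hQd.dotProduct_mulVec_nonneg (fun i => hQ.diag_pos.le) fun i => ?_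
    simpa [Δ, hdiag, mulVec_sub] using
      SlopeRestricted.sector_nonneg (hslope i) ((W *ᵥ x + B *ᵥ u) i) ((W *ᵥ xt + B *ᵥ u) i)
  have hstep : (-x + Ψ (W *ᵥ x + B *ᵥ u)) - (-xt + Ψ (W *ᵥ xt + B *ᵥ u)) = -(x - xt) + Δ := by
    simp only [Δ]; abel
  rw [hstep, add_dotProduct, neg_dotProduct]
  linarith [dotProduct_mulVec_le_of_lmi hPs hQd.isSymm hLMI hsec]

/-- Contractivity of the continuous-time firing-rate neural network with MONE activation. -/
theorem frnn_cts_mone_contraction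
    {n m : ℕ}
    (W : Matrix (Fin n) (Fin n) ℝ) (B : Matrix (Fin n) (Fin m) ℝ) (u : Fin m → ℝ)
    (Ψ : (Fin n → ℝ) → (Fin n → ℝ)) (ψ : Fin n → ℝ → ℝ)
    -- Ψ is diagonal with components ψ i
    (hdiag : ∀ (x : Fin n → ℝ) (i : Fin n), Ψ x i = ψ i (x i))
    -- MONE: each component is slope-restricted in [0,1]
    (hslope : ∀ (i : Fin n) (s t : ℝ),
      0 * (s - t)^2 ≤ (ψ i s - ψ i t) * (s - t) ∧ (ψ i s - ψ i t) * (s - t) ≤ 1 * (s - t)^2)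
    (P Q : Matrix (Fin n) (Fin n) ℝ)
    (hPs : P.IsSymm) (hP : P.PosDef) (hQd : Q.IsDiag) (hQ : Q.PosDef)
    (c : ℝ) (hc : 0 < c)
    (hLMI : (-(fromBlocks ((-(2 * (1 - c))) • P) (P + Wᵀ * Q) (P + Q * W)
        ((-2 : ℝ) • Q))).PosSemidef) :
    ∀ x xt : Fin n → ℝ,
      ((-x + Ψ (W *ᵥ x + B *ᵥ u)) - (-xt + Ψ (W *ᵥ xt + B *ᵥ u))) ⬝ᵥ P *ᵥ (x - xt) ≤
        -c * ((x - xt) ⬝ᵥ P *ᵥ (x - xt)) :=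
  frnn_cts_mone_contraction_general W B u Ψ ψ hdiag hslope P Q hPs hQd hQ c hLMI
end

section
/- Equivalence of the discrete-time CONE certificates with Schur diagonal stability. For W ∈ ℝ^{n×n}, the following are equivalent: (i) there exist a symmetric positive definite P ∈ ℝ^{n×n}, a diagonal positive definite Q ∈ ℝ^{n×n}, and ρ ∈ [0,1) such that the block matrix [[−ρ²P + WᵀQW, 0],[0, P − Q]] is negative semidefinite; (ii) there exist a symmetric positive definite P, a diagonal positive definite Q, and ρ ∈ [0,1) such that [[−ρ²P + Q, 0],[0, WᵀPW − Q]] is negative semidefinite; (iii) W is Schur diagonally stable, i.e., there exists a diagonal positive definite Q such that WᵀQW − Q is negative definite. -/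
open Matrix

/-!
A Schur diagonal stability certificate `Q` (with `Q - WᵀQW ≻ 0`) can always be tightened to
`WᵀQW ⪯ ρ²Q` for some `ρ < 1`: the positive gap `Q - WᵀQW` dominates a small multiple `εQ`, and
`ρ² = 1 - ε`. With this rate, `P = Q` is a firing-rate certificate and `P = ρ⁻²Q` a Hopfield
certificate. Conversely, both certificates sandwich `WᵀQW` below `ρ²Q ≺ Q`, through `P` in the
firing-rate case and through the congruence `W ↦ WᵀPW` in the Hopfield case.
-/

open Filter Topology
open scoped MatrixOrder ComplexOrder

namespace Matrix

theorem posSemidef_fromBlocks_zero_iff {m n R : Type*} [Fintype m] [Fintype n] [Ring R]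
    [PartialOrder R] [StarRing R] [AddLeftMono R] {A : Matrix m m R} {D : Matrix n n R} :
    (fromBlocks A 0 0 D).PosSemidef ↔ A.PosSemidef ∧ D.PosSemidef := by
  refine ⟨fun h => ⟨h.submatrix Sum.inl, h.submatrix Sum.inr⟩,
    fun ⟨hA, hD⟩ => .of_dotProduct_mulVec_nonneg ?_ fun x => ?_⟩
  · simpa [isHermitian_fromBlocks_iff] using ⟨hA.1, hD.1⟩
  · rw [← Sum.elim_comp_inl_inr x, fromBlocks_mulVec, Function.star_sumElim,
      sumElim_dotProduct_sumElim]
    simpa using add_nonneg (hA.dotProduct_mulVec_nonneg (x ∘ Sum.inl))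
      (hD.dotProduct_mulVec_nonneg (x ∘ Sum.inr))

section RCLike

variable {m 𝕜 : Type*} [Fintype m] [DecidableEq m] [RCLike 𝕜]

theorem PosDef.eventually_posSemidef_sub_smul {B Q : Matrix m m 𝕜} (hB : B.PosDef)
    (hQ : Q.IsHermitian) : ∀ᶠ ε in 𝓝[>] (0 : ℝ), (B - ε • Q).PosSemidef := by
  cases isEmpty_or_nonempty m
  · exact .of_forall fun ε => by rw [Subsingleton.elim (B - ε • Q) 0]; exact .zero
  obtain ⟨r, hr, hrB⟩ : ∃ r > 0, algebraMap ℝ (Matrix m m 𝕜) r ≤ B :=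
    (CFC.exists_pos_algebraMap_le_iff hB.isHermitian).2 fun _ hx =>
      (isStrictlyPositive_iff_posDef.2 hB).spectrum_pos hx
  obtain ⟨s, hs⟩ :=
    (isCompact_iff_compactSpace.2 inferInstance : IsCompact (spectrum ℝ Q)).bddAbove
  set t := max s r
  have ht : 0 < t := lt_max_of_lt_right hr
  have hQt : Q ≤ algebraMap ℝ (Matrix m m 𝕜) t :=
    le_algebraMap_of_spectrum_le fun x hx => (hs hx).trans (le_max_left _ _)
  filter_upwards [Ioc_mem_nhdsGT (div_pos hr ht)] with ε ⟨hε, hεr⟩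
  have hsplit : B - ε • Q = (B - algebraMap ℝ _ r) +
      ((r - ε * t) • 1 + ε • (algebraMap ℝ _ t - Q)) := by
    simp only [Algebra.algebraMap_eq_smul_one]; module
  rw [hsplit]
  exact PosSemidef.add hrB <| (PosSemidef.one.smul (by rwa [sub_nonneg, ← le_div_iff₀ ht])).add
    (PosSemidef.smul hQt hε.le)

theorem exists_posSemidef_sq_smul_sub {Q M : Matrix m m 𝕜} (hQ : Q.IsHermitian)
    (h : (Q - M).PosDef) : ∃ ρ : ℝ, 0 < ρ ∧ ρ < 1 ∧ (ρ ^ 2 • Q - M).PosSemidef := by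
  obtain ⟨ε, hgap, hε0, hε1⟩ :=
    ((h.eventually_posSemidef_sub_smul hQ).and (Ioo_mem_nhdsGT one_pos)).exists
  refine ⟨√(1 - ε), Real.sqrt_pos.2 (by linarith), (Real.sqrt_lt' one_pos).2 (by linarith), ?_⟩
  rw [Real.sq_sqrt (by linarith)]
  convert hgap using 1
  module

end RCLike

section Real

variable {m : Type*} [Fintype m] {P Q W : Matrix m m ℝ} {ρ : ℝ}

theorem posDef_sub_transpose_mul_mul_of_firingRate (hP : P.PosDef) (hρ : ρ ^ 2 < 1)
    (h₁ : (ρ ^ 2 • P - Wᵀ * Q * W).PosSemidef) (h₂ : (Q - P).PosSemidef) :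
    (Q - Wᵀ * Q * W).PosDef := by
  have hsplit : Q - Wᵀ * Q * W = (Q - P) + (1 - ρ ^ 2) • P + (ρ ^ 2 • P - Wᵀ * Q * W) := by
    module
  rw [hsplit]
  exact (PosDef.posSemidef_add h₂ (hP.smul (sub_pos.2 hρ))).add_posSemidef h₁

theorem posDef_sub_transpose_mul_mul_of_hopfield (hQ : Q.PosDef) (hρ : ρ ^ 2 < 1)
    (h₁ : (ρ ^ 2 • P - Q).PosSemidef) (h₂ : (Q - Wᵀ * P * W).PosSemidef) :
    (Q - Wᵀ * Q * W).PosDef := by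
  have hsplit : Q - Wᵀ * Q * W =
      (1 - ρ ^ 2) • Q + Wᵀ * (ρ ^ 2 • P - Q) * W + ρ ^ 2 • (Q - Wᵀ * P * W) := by
    simp only [Matrix.mul_sub, Matrix.sub_mul, Matrix.mul_smul, Matrix.smul_mul]
    module
  have hconj : (Wᵀ * (ρ ^ 2 • P - Q) * W).PosSemidef := by
    simpa using h₁.conjTranspose_mul_mul_same W
  rw [hsplit]
  exact ((hQ.smul (sub_pos.2 hρ)).add_posSemidef hconj).add_posSemidef (h₂.smul (sq_nonneg ρ))

end Real

end Matrix

/-- Equivalence of the discrete-time CONE certificates (firing-rate and Hopfield)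
with Schur diagonal stability. -/
theorem disc_cone_iff_schur_diag_stable
    {n : ℕ} (W : Matrix (Fin n) (Fin n) ℝ) :
    -- (i) ↔ (iii)
    ((∃ (P Q : Matrix (Fin n) (Fin n) ℝ) (ρ : ℝ),
        P.IsSymm ∧ P.PosDef ∧ Q.IsDiag ∧ Q.PosDef ∧ 0 ≤ ρ ∧ ρ < 1 ∧
        (-(fromBlocks ((-(ρ^2)) • P + Wᵀ * Q * W) (0 : Matrix (Fin n) (Fin n) ℝ)
            (0 : Matrix (Fin n) (Fin n) ℝ) (P - Q))).PosSemidef) ↔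
      (∃ Q : Matrix (Fin n) (Fin n) ℝ, Q.IsDiag ∧ Q.PosDef ∧
        (-(Wᵀ * Q * W - Q)).PosDef)) ∧
    -- (ii) ↔ (iii)
    ((∃ (P Q : Matrix (Fin n) (Fin n) ℝ) (ρ : ℝ),
        P.IsSymm ∧ P.PosDef ∧ Q.IsDiag ∧ Q.PosDef ∧ 0 ≤ ρ ∧ ρ < 1 ∧
        (-(fromBlocks ((-(ρ^2)) • P + Q) (0 : Matrix (Fin n) (Fin n) ℝ)
            (0 : Matrix (Fin n) (Fin n) ℝ) (Wᵀ * P * W - Q))).PosSemidef) ↔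
      (∃ Q : Matrix (Fin n) (Fin n) ℝ, Q.IsDiag ∧ Q.PosDef ∧
        (-(Wᵀ * Q * W - Q)).PosDef)) := by
  simp only [fromBlocks_neg, neg_zero, posSemidef_fromBlocks_zero_iff, neg_add', neg_smul,
    neg_neg, neg_sub]
  refine ⟨⟨?_, ?_⟩, ⟨?_, ?_⟩⟩
  · rintro ⟨P, Q, ρ, -, hP, hQd, hQ, hρ0, hρ1, h₁, h₂⟩
    exact ⟨Q, hQd, hQ, posDef_sub_transpose_mul_mul_of_firingRate hP
      (pow_lt_one₀ hρ0 hρ1 two_ne_zero) h₁ h₂⟩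
  · rintro ⟨Q, hQd, hQ, hW⟩
    obtain ⟨ρ, hρ0, hρ1, hρ⟩ := exists_posSemidef_sq_smul_sub hQ.isHermitian hW
    exact ⟨Q, Q, ρ, hQd.isSymm, hQ, hQd, hQ, hρ0.le, hρ1, hρ, by simpa using PosSemidef.zero⟩
  · rintro ⟨P, Q, ρ, -, -, hQd, hQ, hρ0, hρ1, h₁, h₂⟩
    exact ⟨Q, hQd, hQ, posDef_sub_transpose_mul_mul_of_hopfield hQ
      (pow_lt_one₀ hρ0 hρ1 two_ne_zero) h₁ h₂⟩
  · rintro ⟨Q, hQd, hQ, hW⟩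
    obtain ⟨ρ, hρ0, hρ1, hρ⟩ := exists_posSemidef_sq_smul_sub hQ.isHermitian hW
    have hρ2 : ρ ^ 2 ≠ 0 := by positivity
    have h₁ : ρ ^ 2 • (ρ ^ 2)⁻¹ • Q - Q = 0 := by simp [smul_smul, hρ2]
    have h₂ : Q - Wᵀ * ((ρ ^ 2)⁻¹ • Q) * W = (ρ ^ 2)⁻¹ • (ρ ^ 2 • Q - Wᵀ * Q * W) := by
      rw [Matrix.mul_smul, Matrix.smul_mul, smul_sub, smul_smul, inv_mul_cancel₀ hρ2, one_smul]
    refine ⟨(ρ ^ 2)⁻¹ • Q, Q, ρ, hQd.isSymm.smul _, hQ.smul (by positivity), hQd, hQ, hρ0.le,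
      hρ1, h₁ ▸ .zero, h₂ ▸ hρ.smul (by positivity)⟩
end

section
/- CONE certificates imply MONE certificates with the same data. Let W ∈ ℝ^{n×n}, let P ∈ ℝ^{n×n} be symmetric positive definite, Q ∈ ℝ^{n×n} diagonal positive definite, c ∈ ℝ, and ρ ∈ ℝ. Then: (a) if [[−2(1−c)P + WᵀQW, P],[P, −Q]] ⪯ 0 then [[−2(1−c)P, P + WᵀQ],[P + QW, −2Q]] ⪯ 0; (b) if [[−2(1−c)P + Q, PW],[WᵀP, −Q]] ⪯ 0 then [[−2(1−c)P, PW + Q],[WᵀP + Q, −2Q]] ⪯ 0; (c) if [[−ρ²P + WᵀQW, 0],[0, P − Q]] ⪯ 0 then [[−ρ²P, WᵀQ],[QW, P − 2Q]] ⪯ 0; (d) if [[−ρ²P + Q, 0],[0, WᵀPW − Q]] ⪯ 0 then [[−ρ²P, Q],[Q, WᵀPW − 2Q]] ⪯ 0. -/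
open Matrix

/-
Each MONE matrix is the corresponding CONE matrix minus a positive semidefinite slack:
in (a) and (c) the slack is the quadratic form `(x, y) ↦ (Wx - y)ᵀ Q (Wx - y)`, in (b) and (d)
it is `(x, y) ↦ (x - y)ᵀ Q (x - y)`. Hence CONE ⪯ 0 forces MONE ⪯ CONE ⪯ 0.
-/

namespace Matrix

variable {R : Type*} [Ring R] [PartialOrder R] [StarRing R] {l m n : Type*}

theorem PosSemidef.fromBlocks_conjTranspose_mul_mul [Fintype l] [Fintype m] [Fintype n]
    {Q : Matrix l l R} (hQ : Q.PosSemidef) (A : Matrix l m R) (B : Matrix l n R) :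
    (fromBlocks (Aᴴ * Q * A) (Aᴴ * Q * B) (Bᴴ * Q * A) (Bᴴ * Q * B)).PosSemidef := by
  have h := hQ.conjTranspose_mul_mul_same (fromCols A B)
  rwa [conjTranspose_fromCols_eq_fromRows_conjTranspose, fromRows_mul,
    fromRows_mul_fromCols] at h

theorem PosSemidef.fromBlocks_conjTranspose_mul_mul_neg [Fintype n] [DecidableEq n]
    {Q : Matrix n n R} (hQ : Q.PosSemidef) (W : Matrix n n R) :
    (fromBlocks (Wᴴ * Q * W) (-(Wᴴ * Q)) (-(Q * W)) Q).PosSemidef := by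
  simpa only [conjTranspose_neg, conjTranspose_one, mul_neg, neg_mul, mul_one, one_mul, neg_neg]
    using hQ.fromBlocks_conjTranspose_mul_mul W (-1 : Matrix n n R)

theorem PosSemidef.neg_fromBlocks_sub [AddLeftMono R] {A A' : Matrix m m R}
    {B B' : Matrix m n R} {C C' : Matrix n m R} {D D' : Matrix n n R}
    (h : (-fromBlocks A B C D).PosSemidef) (hS : (fromBlocks A' B' C' D').PosSemidef) :
    (-fromBlocks (A - A') (B - B') (C - C') (D - D')).PosSemidef := by
  convert h.add hS using 1
  rw [fromBlocks_neg, fromBlocks_neg, fromBlocks_add]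
  congr 1 <;> abel

end Matrix

theorem cone_implies_mone_general
    {n : ℕ} (W : Matrix (Fin n) (Fin n) ℝ)
    (P Q : Matrix (Fin n) (Fin n) ℝ)
    (hQ : Q.PosDef)
    (c ρ : ℝ) :
    -- (a) continuous-time firing-rate
    ((-(fromBlocks ((-(2 * (1 - c))) • P + Wᵀ * Q * W) P P (-Q))).PosSemidef →
      (-(fromBlocks ((-(2 * (1 - c))) • P) (P + Wᵀ * Q) (P + Q * W)
        ((-2 : ℝ) • Q))).PosSemidef) ∧
    -- (b) continuous-time Hopfield
    ((-(fromBlocks ((-(2 * (1 - c))) • P + Q) (P * W) (Wᵀ * P) (-Q))).PosSemidef →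
      (-(fromBlocks ((-(2 * (1 - c))) • P) (P * W + Q) (Wᵀ * P + Q)
        ((-2 : ℝ) • Q))).PosSemidef) ∧
    -- (c) discrete-time firing-rate
    ((-(fromBlocks ((-(ρ^2)) • P + Wᵀ * Q * W) (0 : Matrix (Fin n) (Fin n) ℝ)
        (0 : Matrix (Fin n) (Fin n) ℝ) (P - Q))).PosSemidef →
      (-(fromBlocks ((-(ρ^2)) • P) (Wᵀ * Q) (Q * W) (P - (2 : ℝ) • Q))).PosSemidef) ∧
    -- (d) discrete-time Hopfield
    ((-(fromBlocks ((-(ρ^2)) • P + Q) (0 : Matrix (Fin n) (Fin n) ℝ)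
        (0 : Matrix (Fin n) (Fin n) ℝ) (Wᵀ * P * W - Q))).PosSemidef →
      (-(fromBlocks ((-(ρ^2)) • P) Q Q (Wᵀ * P * W - (2 : ℝ) • Q))).PosSemidef) := by
  have hSW := hQ.posSemidef.fromBlocks_conjTranspose_mul_mul_neg W
  have hS1 := hQ.posSemidef.fromBlocks_conjTranspose_mul_mul_neg 1
  simp only [conjTranspose_eq_transpose_of_trivial, transpose_one, one_mul, mul_one] at hSW hS1
  refine ⟨fun h => ?_, fun h => ?_, fun h => ?_, fun h => ?_⟩
  · convert h.neg_fromBlocks_sub hSW using 2; congr 1 <;> module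
  · convert h.neg_fromBlocks_sub hS1 using 2; congr 1 <;> module
  · convert h.neg_fromBlocks_sub hSW using 2; congr 1 <;> module
  · convert h.neg_fromBlocks_sub hS1 using 2; congr 1 <;> module

/-- CONE certificates imply MONE certificates with the same data, for the
continuous-time firing-rate (a), continuous-time Hopfield (b),
discrete-time firing-rate (c) and discrete-time Hopfield (d) models. -/
theorem cone_implies_mone
    {n : ℕ} (W : Matrix (Fin n) (Fin n) ℝ)
    (P Q : Matrix (Fin n) (Fin n) ℝ)
    (hPs : P.IsSymm) (hP : P.PosDef) (hQd : Q.IsDiag) (hQ : Q.PosDef)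
    (c ρ : ℝ) :
    -- (a) continuous-time firing-rate
    ((-(fromBlocks ((-(2 * (1 - c))) • P + Wᵀ * Q * W) P P (-Q))).PosSemidef →
      (-(fromBlocks ((-(2 * (1 - c))) • P) (P + Wᵀ * Q) (P + Q * W)
        ((-2 : ℝ) • Q))).PosSemidef) ∧
    -- (b) continuous-time Hopfield
    ((-(fromBlocks ((-(2 * (1 - c))) • P + Q) (P * W) (Wᵀ * P) (-Q))).PosSemidef →
      (-(fromBlocks ((-(2 * (1 - c))) • P) (P * W + Q) (Wᵀ * P + Q)
        ((-2 : ℝ) • Q))).PosSemidef) ∧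
    -- (c) discrete-time firing-rate
    ((-(fromBlocks ((-(ρ^2)) • P + Wᵀ * Q * W) (0 : Matrix (Fin n) (Fin n) ℝ)
        (0 : Matrix (Fin n) (Fin n) ℝ) (P - Q))).PosSemidef →
      (-(fromBlocks ((-(ρ^2)) • P) (Wᵀ * Q) (Q * W) (P - (2 : ℝ) • Q))).PosSemidef) ∧
    -- (d) discrete-time Hopfield
    ((-(fromBlocks ((-(ρ^2)) • P + Q) (0 : Matrix (Fin n) (Fin n) ℝ)
        (0 : Matrix (Fin n) (Fin n) ℝ) (Wᵀ * P * W - Q))).PosSemidef →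
      (-(fromBlocks ((-(ρ^2)) • P) Q Q (Wᵀ * P * W - (2 : ℝ) • Q))).PosSemidef) :=
  cone_implies_mone_general W P Q hQ c ρ
end

section
/- Discrete-time certificates imply continuous-time certificates with rate c = (1 − ρ²)/2. Let W ∈ ℝ^{n×n}, let P ∈ ℝ^{n×n} be symmetric positive definite, Q ∈ ℝ^{n×n} diagonal positive definite, and ρ ∈ [0,1), and set c = (1 − ρ²)/2. Then: (a) if the discrete-time firing-rate MONE certificate [[−ρ²P, WᵀQ],[QW, P − 2Q]] ⪯ 0 holds, then the continuous-time firing-rate MONE certificate [[−2(1−c)P, P + WᵀQ],[P + QW, −2Q]] ⪯ 0 holds with the same P and Q; (b) if the discrete-time firing-rate CONE certificate [[−ρ²P + WᵀQW, 0],[0, P − Q]] ⪯ 0 holds, then the continuous-time firing-rate CONE certificate [[−2(1−c)P + WᵀQW, P],[P, −Q]] ⪯ 0 holds with the same P and Q. -/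
/-!
Subtracting `P` from the diagonal blocks and adding it to the off-diagonal blocks of a block
matrix adds `[[P, -P], [-P, P]] = [1, -1]ᴴ P [1, -1]` to its negative, and this matrix is positive
semidefinite. Since `2(1 - c) = 1 + ρ²`, each continuous-time certificate arises from the
corresponding discrete-time one by exactly this perturbation.
-/

open Matrix

namespace Matrix.PosSemidef

variable {m R : Type*} [Fintype m] [DecidableEq m] [Ring R] [PartialOrder R] [StarRing R]
  {A B C D P : Matrix m m R}

theorem fromBlocks_neg_self (hP : P.PosSemidef) : (fromBlocks P (-P) (-P) P).PosSemidef := by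
  have h := hP.conjTranspose_mul_mul_same (fromCols (1 : Matrix m m R) (-1 : Matrix m m R))
  rw [conjTranspose_fromCols_eq_fromRows_conjTranspose, fromRows_mul, fromRows_mul_fromCols]
    at h
  simpa using h

theorem neg_fromBlocks_sub_add [AddLeftMono R] (h : (-fromBlocks A B C D).PosSemidef)
    (hP : P.PosSemidef) : (-fromBlocks (A - P) (B + P) (C + P) (D - P)).PosSemidef := by
  convert h.add hP.fromBlocks_neg_self using 1
  rw [fromBlocks_neg, fromBlocks_neg, fromBlocks_add]
  congr 1 <;> abel

end Matrix.PosSemidef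

theorem disc_implies_cts_general
    {n : ℕ} (W : Matrix (Fin n) (Fin n) ℝ)
    (P Q : Matrix (Fin n) (Fin n) ℝ)
    (hP : P.PosDef)
    (ρ c : ℝ) (hc : c = (1 - ρ^2) / 2) :
    -- (a) MONE certificates
    ((-(fromBlocks ((-(ρ^2)) • P) (Wᵀ * Q) (Q * W) (P - (2 : ℝ) • Q))).PosSemidef →
      (-(fromBlocks ((-(2 * (1 - c))) • P) (P + Wᵀ * Q) (P + Q * W)
        ((-2 : ℝ) • Q))).PosSemidef) ∧
    -- (b) CONE certificates
    ((-(fromBlocks ((-(ρ^2)) • P + Wᵀ * Q * W) (0 : Matrix (Fin n) (Fin n) ℝ)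
        (0 : Matrix (Fin n) (Fin n) ℝ) (P - Q))).PosSemidef →
      (-(fromBlocks ((-(2 * (1 - c))) • P + Wᵀ * Q * W) P P (-Q))).PosSemidef) := by
  have hrate : -(2 * (1 - c)) = -ρ ^ 2 - 1 := by rw [hc]; ring
  refine ⟨fun h ↦ ?_, fun h ↦ ?_⟩ <;>
  · convert h.neg_fromBlocks_sub_add hP.posSemidef using 3 <;> (try rw [hrate]) <;> module

/-- Discrete-time firing-rate certificates imply the corresponding continuous-time
certificates with rate `c = (1 - ρ²)/2`, with the same `P`, `Q`. -/
theorem disc_implies_cts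
    {n : ℕ} (W : Matrix (Fin n) (Fin n) ℝ)
    (P Q : Matrix (Fin n) (Fin n) ℝ)
    (hPs : P.IsSymm) (hP : P.PosDef) (hQd : Q.IsDiag) (hQ : Q.PosDef)
    (ρ c : ℝ) (hρ0 : 0 ≤ ρ) (hρ1 : ρ < 1) (hc : c = (1 - ρ^2) / 2) :
    -- (a) MONE certificates
    ((-(fromBlocks ((-(ρ^2)) • P) (Wᵀ * Q) (Q * W) (P - (2 : ℝ) • Q))).PosSemidef →
      (-(fromBlocks ((-(2 * (1 - c))) • P) (P + Wᵀ * Q) (P + Q * W)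
        ((-2 : ℝ) • Q))).PosSemidef) ∧
    -- (b) CONE certificates
    ((-(fromBlocks ((-(ρ^2)) • P + Wᵀ * Q * W) (0 : Matrix (Fin n) (Fin n) ℝ)
        (0 : Matrix (Fin n) (Fin n) ℝ) (P - Q))).PosSemidef →
      (-(fromBlocks ((-(2 * (1 - c))) • P + Wᵀ * Q * W) P P (-Q))).PosSemidef) :=
  disc_implies_cts_general W P Q hP ρ c hc
end

section
/- Duality between firing-rate and Hopfield continuous-time certificates. Let W ∈ ℝ^{n×n}, P ∈ ℝ^{n×n} symmetric positive definite, Q ∈ ℝ^{n×n} diagonal positive definite, and c ∈ ℝ. Then: (a) the continuous-time firing-rate MONE certificate [[−2(1−c)P, P + WᵀQ],[P + QW, −2Q]] ⪯ 0 holds if and only if the continuous-time Hopfield MONE certificate for Wᵀ with parameters (P⁻¹, Q⁻¹), namely [[−2(1−c)P⁻¹, P⁻¹Wᵀ + Q⁻¹],[WP⁻¹ + Q⁻¹, −2Q⁻¹]] ⪯ 0, holds; (b) assuming additionally c < 1, the continuous-time firing-rate CONE certificate [[−2(1−c)P + WᵀQW, P],[P, −Q]] ⪯ 0 holds if and only if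 the continuous-time Hopfield CONE certificate for Wᵀ with parameters (P⁻¹, Q⁻¹), namely [[−2(1−c)P⁻¹ + Q⁻¹, P⁻¹Wᵀ],[WP⁻¹, −Q⁻¹]] ⪯ 0, holds. -/
/-!
Both equivalences are congruences. In the MONE case, conjugating the firing-rate certificate by
the block diagonal matrix `diag(P⁻¹, Q⁻¹)` turns it into the Hopfield certificate for `Wᵀ`. In the
CONE case, the lower right blocks `-Q` and `-Q⁻¹` are negative definite, so each certificate is
equivalent to its Schur complement being negative semidefinite, and conjugating the firing-rate
Schur complement `-2(1-c)P + WᵀQW + PQ⁻¹P` by `P⁻¹` gives the Hopfield one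
`-2(1-c)P⁻¹ + Q⁻¹ + P⁻¹WᵀQWP⁻¹`.
-/

open Matrix

namespace Matrix

section Conjugate

variable {ι R : Type*} [Fintype ι] [DecidableEq ι]

theorem IsHermitian.posSemidef_conj_iff [Ring R] [PartialOrder R] [StarRing R]
    {U x : Matrix ι ι R} (hU : U.IsHermitian) (hUu : IsUnit U) :
    (U * x * U).PosSemidef ↔ x.PosSemidef := by
  simpa only [star_eq_conjTranspose, hU.eq] using hUu.posSemidef_star_left_conjugate_iff

theorem posSemidef_neg_fromBlocks_iff_schur [Field R] [PartialOrder R] [StarRing R]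
    [StarOrderedRing R] {κ : Type*} [Finite κ] (A : Matrix κ κ R) (B : Matrix κ ι R)
    {D : Matrix ι ι R} (hD : D.PosDef) :
    (-(fromBlocks A B Bᴴ (-D))).PosSemidef ↔ (-A - B * D⁻¹ * Bᴴ).PosSemidef := by
  have := hD.isUnit.invertible
  rw [fromBlocks_neg, neg_neg, ← conjTranspose_neg, PosDef.fromBlocks₂₂ _ _ hD,
    conjTranspose_neg, Matrix.neg_mul, Matrix.neg_mul, Matrix.mul_neg, neg_neg]

end Conjugate

section Certificates

variable {ι R : Type*} [Fintype ι] [DecidableEq ι] [CommRing R]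

theorem fromBlocks_inv_mul_mone_mul_fromBlocks_inv {P Q : Matrix ι ι R} (hP : IsUnit P.det)
    (hQ : IsUnit Q.det) (W : Matrix ι ι R) (a b : R) :
    fromBlocks P⁻¹ 0 0 Q⁻¹ * fromBlocks (a • P) (P + Wᵀ * Q) (P + Q * W) (b • Q) *
        fromBlocks P⁻¹ 0 0 Q⁻¹ =
      fromBlocks (a • P⁻¹) (P⁻¹ * Wᵀ + Q⁻¹) (W * P⁻¹ + Q⁻¹) (b • Q⁻¹) := by
  simp only [fromBlocks_multiply, Matrix.zero_mul, Matrix.mul_zero, smul_zero, add_zero, zero_add,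
    Matrix.mul_add, Matrix.add_mul, Matrix.mul_smul, Matrix.smul_mul, Matrix.mul_assoc,
    nonsing_inv_mul_cancel_left _ _ hP, nonsing_inv_mul_cancel_left _ _ hQ,
    mul_nonsing_inv _ hP, mul_nonsing_inv _ hQ, Matrix.mul_one]
  rw [add_comm (Q⁻¹), add_comm (Q⁻¹)]

theorem inv_mul_cone_schur_mul_inv {P : Matrix ι ι R} (hP : IsUnit P.det)
    (Q W : Matrix ι ι R) (a : R) :
    P⁻¹ * (-(a • P + Wᵀ * Q * W) - P * Q⁻¹ * P) * P⁻¹ =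
      -(a • P⁻¹ + Q⁻¹) - P⁻¹ * Wᵀ * Q * (W * P⁻¹) := by
  simp only [Matrix.mul_sub, Matrix.sub_mul, Matrix.mul_neg, Matrix.neg_mul, Matrix.mul_add,
    Matrix.add_mul, Matrix.mul_smul, Matrix.smul_mul, Matrix.mul_assoc,
    nonsing_inv_mul_cancel_left _ _ hP, mul_nonsing_inv _ hP, Matrix.mul_one]
  abel

end Certificates

end Matrix

theorem frnn_hopfield_duality_general
    {n : ℕ} (W : Matrix (Fin n) (Fin n) ℝ)
    (P Q : Matrix (Fin n) (Fin n) ℝ)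
    (hP : P.PosDef) (hQ : Q.PosDef)
    (c : ℝ) :
    -- (a) MONE case
    ((-(fromBlocks ((-(2 * (1 - c))) • P) (P + Wᵀ * Q) (P + Q * W)
        ((-2 : ℝ) • Q))).PosSemidef ↔
      (-(fromBlocks ((-(2 * (1 - c))) • P⁻¹) (P⁻¹ * Wᵀ + Q⁻¹) (W * P⁻¹ + Q⁻¹)
        ((-2 : ℝ) • Q⁻¹))).PosSemidef) ∧
    -- (b) CONE case, assuming c < 1
    (c < 1 →
      ((-(fromBlocks ((-(2 * (1 - c))) • P + Wᵀ * Q * W) P P (-Q))).PosSemidef ↔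
        (-(fromBlocks ((-(2 * (1 - c))) • P⁻¹ + Q⁻¹) (P⁻¹ * Wᵀ) (W * P⁻¹)
          (-Q⁻¹))).PosSemidef)) := by
  have hPu := (isUnit_iff_isUnit_det P).mp hP.isUnit
  have hQu := (isUnit_iff_isUnit_det Q).mp hQ.isUnit
  have hPinv : P⁻¹.IsHermitian := hP.isHermitian.inv
  refine ⟨?_, fun _ => ?_⟩
  · have hD : (fromBlocks P⁻¹ 0 0 Q⁻¹).IsHermitian :=
      hPinv.fromBlocks conjTranspose_zero hQ.isHermitian.inv
    have hDu : IsUnit (fromBlocks P⁻¹ 0 0 Q⁻¹) := by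
      rw [isUnit_iff_isUnit_det, det_fromBlocks_zero₂₁]
      exact (isUnit_nonsing_inv_det P hPu).mul (isUnit_nonsing_inv_det Q hQu)
    rw [← hD.posSemidef_conj_iff hDu, mul_neg, neg_mul,
      fromBlocks_inv_mul_mone_mul_fromBlocks_inv hPu hQu]
  · have hWP : (P⁻¹ * Wᵀ)ᴴ = W * P⁻¹ := by
      rw [conjTranspose_mul, hPinv.eq, conjTranspose_eq_transpose_of_trivial, transpose_transpose]
    have hFR := posSemidef_neg_fromBlocks_iff_schur ((-(2 * (1 - c))) • P + Wᵀ * Q * W) P hQ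
    have hHop := posSemidef_neg_fromBlocks_iff_schur ((-(2 * (1 - c))) • P⁻¹ + Q⁻¹) (P⁻¹ * Wᵀ)
      hQ.inv
    rw [hP.isHermitian.eq] at hFR
    rw [hWP, nonsing_inv_nonsing_inv _ hQu] at hHop
    rw [hFR, hHop, ← hPinv.posSemidef_conj_iff hP.inv.isUnit, inv_mul_cone_schur_mul_inv hPu]

/-- Duality between the continuous-time firing-rate and Hopfield certificates:
`W` satisfies a firing-rate certificate with data `(P, Q)` iff `Wᵀ` satisfies the
corresponding Hopfield certificate with data `(P⁻¹, Q⁻¹)`. -/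
theorem frnn_hopfield_duality
    {n : ℕ} (W : Matrix (Fin n) (Fin n) ℝ)
    (P Q : Matrix (Fin n) (Fin n) ℝ)
    (hPs : P.IsSymm) (hP : P.PosDef) (hQd : Q.IsDiag) (hQ : Q.PosDef)
    (c : ℝ) :
    -- (a) MONE case
    ((-(fromBlocks ((-(2 * (1 - c))) • P) (P + Wᵀ * Q) (P + Q * W)
        ((-2 : ℝ) • Q))).PosSemidef ↔
      (-(fromBlocks ((-(2 * (1 - c))) • P⁻¹) (P⁻¹ * Wᵀ + Q⁻¹) (W * P⁻¹ + Q⁻¹)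
        ((-2 : ℝ) • Q⁻¹))).PosSemidef) ∧
    -- (b) CONE case, assuming c < 1
    (c < 1 →
      ((-(fromBlocks ((-(2 * (1 - c))) • P + Wᵀ * Q * W) P P (-Q))).PosSemidef ↔
        (-(fromBlocks ((-(2 * (1 - c))) • P⁻¹ + Q⁻¹) (P⁻¹ * Wᵀ) (W * P⁻¹)
          (-Q⁻¹))).PosSemidef)) :=
  frnn_hopfield_duality_general W P Q hP hQ c
end

section
/- The continuous-time firing-rate MONE certificate implies Lyapunov diagonal stability of W − I. Let W ∈ ℝ^{n×n}, let P ∈ ℝ^{n×n} be symmetric positive definite, Q ∈ ℝ^{n×n} diagonal positive definite, and c > 0. If the block matrix [[−2(1−c)P, P + WᵀQ],[P + QW, −2Q]] is negative semidefinite, then WᵀQ + QW ⪯ 2Q − 2cP; in particular 2Q − WᵀQ − QW is positive definite, i.e., Q(W − Iₙ) + (W − Iₙ)ᵀQ ≺ 0, so W − Iₙ is Lyapunov diagonally stable with diagonal Lyapunov matrix Q. -/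
/-!
Compressing the negated certificate by the block column `[I; I]` adds up its four blocks,
which gives `2Q - 2cP - (WᵀQ + QW) ⪰ 0`. Adding the positive definite `2cP` makes
`2Q - WᵀQ - QW` positive definite, and this matrix is `-(Q(W - I) + (W - I)ᵀQ)`.
-/

open Matrix

theorem Matrix.PosSemidef.sum_blocks_of_fromBlocks {m R : Type*} [Fintype m] [DecidableEq m]
    [Ring R] [PartialOrder R] [StarRing R] {A B C D : Matrix m m R}
    (h : (fromBlocks A B C D).PosSemidef) : (A + B + C + D).PosSemidef := by
  have key := h.conjTranspose_mul_mul_same (fromRows (1 : Matrix m m R) 1)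
  rw [conjTranspose_fromRows_eq_fromCols_conjTranspose, conjTranspose_one,
    fromCols_mul_fromBlocks, fromCols_mul_fromRows] at key
  simpa only [Matrix.one_mul, Matrix.mul_one, ← add_assoc, add_right_comm A] using key

theorem mone_certificate_implies_lds_general
    {n : ℕ} (W : Matrix (Fin n) (Fin n) ℝ)
    (P Q : Matrix (Fin n) (Fin n) ℝ)
    (hP : P.PosDef)
    (c : ℝ) (hc : 0 < c)
    (hLMI : (-(fromBlocks ((-(2 * (1 - c))) • P) (P + Wᵀ * Q) (P + Q * W)
        ((-2 : ℝ) • Q))).PosSemidef) :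
    -- WᵀQ + QW ⪯ 2Q − 2cP
    ((2 : ℝ) • Q - (2 * c) • P - (Wᵀ * Q + Q * W)).PosSemidef ∧
    -- 2Q − WᵀQ − QW ≻ 0
    ((2 : ℝ) • Q - Wᵀ * Q - Q * W).PosDef ∧
    -- Q(W − I) + (W − I)ᵀQ ≺ 0
    (-(Q * (W - 1) + (W - 1)ᵀ * Q)).PosDef := by
  have hcompress : ((2 : ℝ) • Q - (2 * c) • P - (Wᵀ * Q + Q * W)).PosSemidef := by
    rw [fromBlocks_neg] at hLMI
    convert hLMI.sum_blocks_of_fromBlocks using 1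
    simp only [neg_smul, neg_neg, mul_sub, mul_one, sub_smul, two_smul, mul_smul]
    abel
  have hdiss : ((2 : ℝ) • Q - Wᵀ * Q - Q * W).PosDef := by
    convert PosDef.posSemidef_add hcompress (hP.smul (by positivity : 0 < 2 * c)) using 1
    abel
  refine ⟨hcompress, hdiss, ?_⟩
  convert hdiss using 1
  simp only [transpose_sub, transpose_one, Matrix.mul_sub, Matrix.sub_mul, Matrix.mul_one,
    Matrix.one_mul, two_smul]
  abel

/-- The continuous-time firing-rate MONE certificate implies Lyapunov diagonal
stability of `W - I` with diagonal Lyapunov matrix `Q`. -/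
theorem mone_certificate_implies_lds
    {n : ℕ} (W : Matrix (Fin n) (Fin n) ℝ)
    (P Q : Matrix (Fin n) (Fin n) ℝ)
    (hPs : P.IsSymm) (hP : P.PosDef) (hQd : Q.IsDiag) (hQ : Q.PosDef)
    (c : ℝ) (hc : 0 < c)
    (hLMI : (-(fromBlocks ((-(2 * (1 - c))) • P) (P + Wᵀ * Q) (P + Q * W)
        ((-2 : ℝ) • Q))).PosSemidef) :
    -- WᵀQ + QW ⪯ 2Q − 2cP
    ((2 : ℝ) • Q - (2 * c) • P - (Wᵀ * Q + Q * W)).PosSemidef ∧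
    -- 2Q − WᵀQ − QW ≻ 0
    ((2 : ℝ) • Q - Wᵀ * Q - Q * W).PosDef ∧
    -- Q(W − I) + (W − I)ᵀQ ≺ 0
    (-(Q * (W - 1) + (W - 1)ᵀ * Q)).PosDef :=
  mone_certificate_implies_lds_general W P Q hP c hc hLMI
end

section
/- Lyapunov diagonal stability of W − I does not imply contraction in any fixed quadratic norm: for the skew-symmetric matrix W = [[0, 4],[−4, 0]] ∈ ℝ^{2×2}, (a) W − I₂ is Lyapunov diagonally stable (indeed W + Wᵀ = 0 ≺ 2I₂, so Q = I₂ works); and (b) there exists no symmetric positive definite P ∈ ℝ^{2×2} such that 2P − PDW − WᵀDP is positive definite for every diagonal matrix D with 0 ⪯ D ⪯ I₂. In fact, for every symmetric positive definite P, at least one of the two matrices 2P − PD₁W − WᵀD₁P and 2P − PD₂W − WᵀD₂P fails to be positive definite, where D₁ = diag(1,0) and D₂ = diag(0,1). -/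
/-!
The vertex `D = diag(1,0)` forces `p(r - aq) > (q - ap/2)²` and the vertex `D = diag(0,1)` forces
`(p + aq)r > (q + ar/2)²`, where `P = [[p,q],[q,r]]` and `W = [[0,a],[-a,0]]`; adding the two
determinant conditions gives `2pr - 2q² > a²(p² + r²)/4`, impossible once `a² ≥ 4`. On the other
hand `-(W - I) - (W - I)ᵀ = 2I` for every skew-symmetric `W`, so `Q = I` shows Lyapunov diagonal
stability of `W - I`.
-/

open Matrix

theorem posDef_neg_sub_one_add_transpose_of_transpose_eq_neg {n : Type*} [Fintype n]
    [DecidableEq n] {W : Matrix n n ℝ} (hW : Wᵀ = -W) :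
    (-(1 * (W - 1) + (W - 1)ᵀ * 1)).PosDef := by
  have h : -(1 * (W - 1) + (W - 1)ᵀ * 1) = 2 := by
    rw [one_mul, mul_one, transpose_sub, hW, transpose_one, ← one_add_one_eq_two]
    abel
  exact h ▸ PosDef.ofNat 2

theorem posSemidef_one_sub_diagonal {n : Type*} [DecidableEq n] {d : n → ℝ} (hd : ∀ i, d i ≤ 1) :
    (1 - diagonal d).PosSemidef := by
  rw [← diagonal_one, diagonal_sub]
  exact PosSemidef.diagonal fun i => sub_nonneg.2 (hd i)

def contractionMatrix {n : Type*} [Fintype n] (P D W : Matrix n n ℝ) : Matrix n n ℝ :=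
  (2 : ℝ) • P - P * D * W - Wᵀ * D * P

theorem det_contractionMatrix_diagonal_one_zero (a : ℝ) {P : Matrix (Fin 2) (Fin 2) ℝ}
    (hP : P.IsSymm) :
    (contractionMatrix P (diagonal ![1, 0]) !![0, a; -a, 0]).det =
      2 * P 0 0 * (2 * P 1 1 - 2 * a * P 0 1) - (2 * P 0 1 - a * P 0 0) ^ 2 := by
  have hq : P 1 0 = P 0 1 := hP.apply 0 1
  simp only [contractionMatrix, det_fin_two, Matrix.sub_apply, Matrix.smul_apply, smul_eq_mul,
    mul_apply, Fin.sum_univ_two, transpose_apply, of_apply, cons_val', cons_val_zero,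
    cons_val_one, cons_val_fin_one, diagonal_apply_eq, diagonal_apply_ne, ne_eq, zero_ne_one,
    one_ne_zero, not_false_eq_true, hq]
  ring

theorem det_contractionMatrix_diagonal_zero_one (a : ℝ) {P : Matrix (Fin 2) (Fin 2) ℝ}
    (hP : P.IsSymm) :
    (contractionMatrix P (diagonal ![0, 1]) !![0, a; -a, 0]).det =
      (2 * P 0 0 + 2 * a * P 0 1) * (2 * P 1 1) - (2 * P 0 1 + a * P 1 1) ^ 2 := by
  have hq : P 1 0 = P 0 1 := hP.apply 0 1
  simp only [contractionMatrix, det_fin_two, Matrix.sub_apply, Matrix.smul_apply, smul_eq_mul,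
    mul_apply, Fin.sum_univ_two, transpose_apply, of_apply, cons_val', cons_val_zero,
    cons_val_one, cons_val_fin_one, diagonal_apply_eq, diagonal_apply_ne, ne_eq, zero_ne_one,
    one_ne_zero, not_false_eq_true, hq]
  ring

theorem not_posDef_contractionMatrix_vertices {a : ℝ} {P : Matrix (Fin 2) (Fin 2) ℝ}
    (ha : 4 ≤ a ^ 2) (hP : P.IsSymm) :
    ¬ ((contractionMatrix P (diagonal ![1, 0]) !![0, a; -a, 0]).PosDef ∧
      (contractionMatrix P (diagonal ![0, 1]) !![0, a; -a, 0]).PosDef) := by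
  rintro ⟨h₁, h₂⟩
  have d₁ := h₁.det_pos
  have d₂ := h₂.det_pos
  rw [det_contractionMatrix_diagonal_one_zero a hP] at d₁
  rw [det_contractionMatrix_diagonal_zero_one a hP] at d₂
  nlinarith [mul_le_mul_of_nonneg_right ha (add_nonneg (sq_nonneg (P 0 0)) (sq_nonneg (P 1 1))),
    sq_nonneg (P 0 0 - P 1 1), sq_nonneg (P 0 1)]

/-- Lyapunov diagonal stability of `W - I` does not imply contraction in any fixed
quadratic norm, witnessed by the skew-symmetric matrix `W = [[0,4],[-4,0]]`. -/
theorem lds_does_not_imply_contraction :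
    -- (a) W − I₂ is Lyapunov diagonally stable (Q = I₂ works)
    (∃ Q : Matrix (Fin 2) (Fin 2) ℝ, Q.IsDiag ∧ Q.PosDef ∧
      (-(Q * ((!![0, 4; -4, 0] : Matrix (Fin 2) (Fin 2) ℝ) - 1) +
         ((!![0, 4; -4, 0] : Matrix (Fin 2) (Fin 2) ℝ) - 1)ᵀ * Q)).PosDef) ∧
    -- (b) no symmetric positive definite P works for all diagonal 0 ⪯ D ⪯ I₂
    (¬ ∃ P : Matrix (Fin 2) (Fin 2) ℝ, P.IsSymm ∧ P.PosDef ∧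
      ∀ D : Matrix (Fin 2) (Fin 2) ℝ, D.IsDiag → D.PosSemidef →
        ((1 : Matrix (Fin 2) (Fin 2) ℝ) - D).PosSemidef →
        ((2 : ℝ) • P - P * D * (!![0, 4; -4, 0] : Matrix (Fin 2) (Fin 2) ℝ) -
          (!![0, 4; -4, 0] : Matrix (Fin 2) (Fin 2) ℝ)ᵀ * D * P).PosDef) ∧
    -- in fact, one of the two vertices D₁ = diag(1,0), D₂ = diag(0,1) always fails
    (∀ P : Matrix (Fin 2) (Fin 2) ℝ, P.IsSymm → P.PosDef →
      ¬ (((2 : ℝ) • P - P * (Matrix.diagonal ![1, 0]) * (!![0, 4; -4, 0] : Matrix (Fin 2) (Fin 2) ℝ) -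
            (!![0, 4; -4, 0] : Matrix (Fin 2) (Fin 2) ℝ)ᵀ * (Matrix.diagonal ![1, 0]) * P).PosDef ∧
         ((2 : ℝ) • P - P * (Matrix.diagonal ![0, 1]) * (!![0, 4; -4, 0] : Matrix (Fin 2) (Fin 2) ℝ) -
            (!![0, 4; -4, 0] : Matrix (Fin 2) (Fin 2) ℝ)ᵀ * (Matrix.diagonal ![0, 1]) * P).PosDef)) := by
  have skew : (!![0, 4; -4, 0] : Matrix (Fin 2) (Fin 2) ℝ)ᵀ = -!![0, 4; -4, 0] := by
    ext i j; fin_cases i <;> fin_cases j <;> simp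
  have four_le_sq : (4 : ℝ) ≤ 4 ^ 2 := by norm_num
  refine ⟨⟨1, isDiag_one, .one, posDef_neg_sub_one_add_transpose_of_transpose_eq_neg skew⟩, ?_,
    fun P hP _ => not_posDef_contractionMatrix_vertices four_le_sq hP⟩
  rintro ⟨P, hP, -, hall⟩
  have at_diagonal : ∀ d : Fin 2 → ℝ, 0 ≤ d → (∀ i, d i ≤ 1) →
      (contractionMatrix P (diagonal d) !![0, 4; -4, 0]).PosDef := fun d hd₀ hd₁ =>
    hall _ (isDiag_diagonal d) (.diagonal hd₀) (posSemidef_one_sub_diagonal hd₁)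
  exact not_posDef_contractionMatrix_vertices four_le_sq hP
    ⟨at_diagonal _ (by simp [Pi.le_def, Fin.forall_fin_two]) (by simp [Fin.forall_fin_two]),
      at_diagonal _ (by simp [Pi.le_def, Fin.forall_fin_two]) (by simp [Fin.forall_fin_two])⟩
end

section
/- Log-optimal certificate for symmetric weights with spectral abscissa in (0,1). Let W ∈ ℝ^{n×n} be symmetric and let α ∈ (0,1) be its largest eigenvalue (so W ⪯ αIₙ and α is an eigenvalue of W). Then there exists a symmetric positive definite P ∈ ℝ^{n×n} such that W = P^{1/2} − (4α)⁻¹P, where P^{1/2} denotes the positive semidefinite square root of P; and for any such P, the continuous-time firing-rate MONE certificate holds with data (P, Q, c) where Q = 4αIₙ and c = 1 − α, i.e., the block matrix [[−2(1−c)P, P + WᵀQ],[P + QW, −2Q]] is negative semidefinite. -/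
/-!
With `S = P^{1/2}`, the relation `W = S - (4α)⁻¹ S²` reads `(S - 2α)² = 4α (α - W)`, so
`S = 2α + 2√α (α - W)^{1/2}` solves it, and this `S` is positive definite because `W ⪯ α`.
Conversely, substituting `W = S - (4α)⁻¹ S²` turns the negated block matrix into the Gram matrix
`2α [S, -2]ᵀ [S, -2]`.
-/

open Matrix

noncomputable def Matrix.PosSemidef.sqrt {n : Type*} [Fintype n] [DecidableEq n] {𝕜 : Type*}
    [RCLike 𝕜] [PartialOrder 𝕜] [StarOrderedRing 𝕜] {A : Matrix n n 𝕜} (hA : A.PosSemidef) : Matrix n n 𝕜 :=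
  hA.isHermitian.eigenvectorUnitary.1 *
    diagonal (((↑) : ℝ → 𝕜) ∘ Real.sqrt ∘ hA.isHermitian.eigenvalues) *
    (star hA.isHermitian.eigenvectorUnitary : Matrix n n 𝕜)

namespace Matrix.PosSemidef

open scoped MatrixOrder

variable {ι : Type*} [Fintype ι] [DecidableEq ι] {A : Matrix ι ι ℝ}

theorem sqrt_eq_cfcSqrt (hA : A.PosSemidef) : hA.sqrt = CFC.sqrt A := by
  rw [CFC.sqrt_eq_real_sqrt A hA.nonneg, cfcₙ_eq_cfc, hA.1.cfc_eq]
  simp [IsHermitian.cfc, Matrix.PosSemidef.sqrt]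

theorem posSemidef_sqrt (hA : A.PosSemidef) : hA.sqrt.PosSemidef := by
  rw [sqrt_eq_cfcSqrt hA]
  exact (CFC.sqrt_nonneg A).posSemidef

theorem sqrt_mul_self (hA : A.PosSemidef) : hA.sqrt * hA.sqrt = A := by
  rw [sqrt_eq_cfcSqrt hA]
  exact CFC.sqrt_mul_sqrt_self A hA.nonneg

theorem eq_sqrt_of_mul_self_eq {B : Matrix ι ι ℝ} (hA : A.PosSemidef) (hB : B.PosSemidef)
    (h : B * B = A) : B = hA.sqrt := by
  rw [sqrt_eq_cfcSqrt hA]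
  exact (CFC.sqrt_unique h hB.nonneg).symm

end Matrix.PosSemidef

section

variable {ι : Type*} [Fintype ι] [DecidableEq ι]

theorem Matrix.PosDef.mul_self {S : Matrix ι ι ℝ} (hS : S.PosDef) : (S * S).PosDef := by
  simpa only [hS.1.eq] using
    PosDef.conjTranspose_mul_self S (mulVec_injective_iff_isUnit.mpr hS.isUnit)

def IsFiringRateMONECertificate (W P Q : Matrix ι ι ℝ) (c : ℝ) : Prop :=
  (-(fromBlocks ((-(2 * (1 - c))) • P) (P + Wᵀ * Q) (P + Q * W) ((-2 : ℝ) • Q))).PosSemidef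

theorem Matrix.IsHermitian.posSemidef_fromBlocks_mul_self_neg_two_smul {S : Matrix ι ι ℝ}
    (hS : S.IsHermitian) :
    (Matrix.fromBlocks (S * S) ((-2 : ℝ) • S) ((-2 : ℝ) • S) ((4 : ℝ) • 1)).PosSemidef := by
  have hGram : (fromCols S ((-2 : ℝ) • 1))ᴴ * fromCols S ((-2 : ℝ) • 1) =
      Matrix.fromBlocks (S * S) ((-2 : ℝ) • S) ((-2 : ℝ) • S) ((4 : ℝ) • 1) := by
    rw [conjTranspose_fromCols_eq_fromRows_conjTranspose, fromRows_mul_fromCols, hS.eq]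
    congr 1 <;> simp [smul_smul]
    norm_num
  exact hGram ▸ posSemidef_conjTranspose_mul_self _

theorem isFiringRateMONECertificate_of_eq_sub_smul_mul_self {α : ℝ} (hα : 0 < α)
    {S P W : Matrix ι ι ℝ} (hS : S.IsHermitian) (hP : S * S = P)
    (hW : W = S - (4 * α)⁻¹ • P) :
    IsFiringRateMONECertificate W P ((4 * α) • 1) (1 - α) := by
  subst hP hW
  have hST : Sᵀ = S := by simpa using hS.eq
  have hblock : -(fromBlocks ((-(2 * (1 - (1 - α)))) • (S * S))
      (S * S + (S - (4 * α)⁻¹ • (S * S))ᵀ * ((4 * α) • 1))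
      (S * S + ((4 * α) • 1) * (S - (4 * α)⁻¹ • (S * S))) ((-2 : ℝ) • ((4 * α) • 1))) =
      (2 * α) • fromBlocks (S * S) ((-2 : ℝ) • S) ((-2 : ℝ) • S) ((4 : ℝ) • 1) := by
    rw [fromBlocks_neg, fromBlocks_smul, transpose_sub, transpose_smul, transpose_mul, hST]
    simp only [Matrix.mul_smul, Matrix.smul_mul, Matrix.mul_one, Matrix.one_mul]
    congr 1 <;> match_scalars <;> field_simp <;> ring
  unfold IsFiringRateMONECertificate
  rw [hblock]
  exact hS.posSemidef_fromBlocks_mul_self_neg_two_smul.smul (by positivity)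

theorem exists_posDef_eq_sqrt_sub_smul {α : ℝ} (hα : 0 < α) {W : Matrix ι ι ℝ}
    (hW : (α • 1 - W).PosSemidef) :
    ∃ (P : Matrix ι ι ℝ) (hP : P.PosDef), W = hP.posSemidef.sqrt - (4 * α)⁻¹ • P := by
  set R := hW.sqrt
  set T : Matrix ι ι ℝ := √α • 1 + R
  have hT : T.PosDef := (PosDef.one.smul (by positivity)).add_posSemidef hW.posSemidef_sqrt
  have hS : ((2 * √α) • T).PosDef := hT.smul (by positivity)
  refine ⟨_, hS.mul_self, ?_⟩
  rw [← hS.mul_self.posSemidef.eq_sqrt_of_mul_self_eq hS.posSemidef rfl]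
  have hsqrt : √α * √α = α := Real.mul_self_sqrt hα.le
  calc W = α • 1 - R * R := by rw [hW.sqrt_mul_self]; abel
    _ = (2 * √α) • T - T * T := by
        simp only [T, add_mul, mul_add, Matrix.smul_mul, Matrix.mul_smul, Matrix.one_mul,
          Matrix.mul_one, smul_add]
        match_scalars <;> linarith
    _ = (2 * √α) • T - (4 * α)⁻¹ • ((2 * √α) • T * ((2 * √α) • T)) := by
        have hscalar : (4 * α)⁻¹ * (2 * √α) * (2 * √α) = 1 := by field_simp; linarith
        rw [Matrix.smul_mul, Matrix.mul_smul, smul_smul, smul_smul, hscalar, one_smul]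

end

theorem symm_spectral_abscissa_certificate_general
    {n : ℕ} (W : Matrix (Fin n) (Fin n) ℝ) (α : ℝ)
    (hα0 : 0 < α)
    (hub : (α • (1 : Matrix (Fin n) (Fin n) ℝ) - W).PosSemidef) :
    (∃ (P : Matrix (Fin n) (Fin n) ℝ) (hP : P.PosDef),
        W = hP.posSemidef.sqrt - (4 * α)⁻¹ • P) ∧
    (∀ (P : Matrix (Fin n) (Fin n) ℝ) (hP : P.PosDef),
      W = hP.posSemidef.sqrt - (4 * α)⁻¹ • P →
      (-(fromBlocks ((-(2 * (1 - (1 - α)))) • P)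
          (P + Wᵀ * ((4 * α) • (1 : Matrix (Fin n) (Fin n) ℝ)))
          (P + ((4 * α) • (1 : Matrix (Fin n) (Fin n) ℝ)) * W)
          ((-2 : ℝ) • ((4 * α) • (1 : Matrix (Fin n) (Fin n) ℝ))))).PosSemidef) :=
  ⟨exists_posDef_eq_sqrt_sub_smul hα0 hub, fun _ hP hW =>
    isFiringRateMONECertificate_of_eq_sub_smul_mul_self hα0
      hP.posSemidef.posSemidef_sqrt.isHermitian hP.posSemidef.sqrt_mul_self hW⟩

/-- Log-optimal firing-rate MONE certificate for symmetric weights with spectral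
abscissa `α ∈ (0,1)`: there exists `P ≻ 0` with `W = P^{1/2} − (4α)⁻¹P`, and any
such `P`, together with `Q = 4αIₙ` and `c = 1 − α`, satisfies the certificate. -/
theorem symm_spectral_abscissa_certificate
    {n : ℕ} (W : Matrix (Fin n) (Fin n) ℝ) (α : ℝ)
    (hsymm : W.IsSymm) (hα0 : 0 < α) (hα1 : α < 1)
    (hub : (α • (1 : Matrix (Fin n) (Fin n) ℝ) - W).PosSemidef)
    (heig : ∃ v : Fin n → ℝ, v ≠ 0 ∧ W *ᵥ v = α • v) :
    (∃ (P : Matrix (Fin n) (Fin n) ℝ) (hP : P.PosDef),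
        W = hP.posSemidef.sqrt - (4 * α)⁻¹ • P) ∧
    (∀ (P : Matrix (Fin n) (Fin n) ℝ) (hP : P.PosDef),
      W = hP.posSemidef.sqrt - (4 * α)⁻¹ • P →
      (-(fromBlocks ((-(2 * (1 - (1 - α)))) • P)
          (P + Wᵀ * ((4 * α) • (1 : Matrix (Fin n) (Fin n) ℝ)))
          (P + ((4 * α) • (1 : Matrix (Fin n) (Fin n) ℝ)) * W)
          ((-2 : ℝ) • ((4 * α) • (1 : Matrix (Fin n) (Fin n) ℝ))))).PosSemidef) :=
  symm_spectral_abscissa_certificate_general W α hα0 hub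
end

section
/- Necessity of subsystem certificates in interconnections of firing-rate networks. Let ι be a finite index type, and for each i ∈ ι let W_i ∈ ℝ^{n_i×n_i}, B_i ∈ ℝ^{n_i×m_i}, C_i ∈ ℝ^{k_i×n_i}. Let W, B, C be the block-diagonal matrices with diagonal blocks W_i, B_i, C_i respectively (W of size n×n, B of size n×m, C of size k×n, where n = Σn_i, m = Σm_i, k = Σk_i), and let Δ ∈ ℝ^{m×k} be arbitrary, with Δ_{ii} ∈ ℝ^{m_i×k_i} denoting its (i,i) block. Suppose the matrix W_net = W + BΔC satisfies the continuous-time firing-rate MONE certificate with data (P, Q, c), where P ∈ ℝ^{n×n} is symmetric positive definite and Q ∈ ℝ^{n×n} is diagonal positive definite, i.e., [[−2(1−c)P, P + W_netᵀQ],[P + QW_net, −2Q]] ⪯ 0. Then for every i ∈ ι, the matrix W_i + B_iΔ_{ii}C_i satisfies the same certificate with data (P_{ii}, Q_i, c), where P_{ii} is the i-th diagonal block (principal submatrix) of P (which is symmetric positive definite) and Q_i is the i-th diagonal block of Q (which is diagonal positive definite); that is, [[−2(1−c)P_{ii}, P_{ii} + (W_i + B_iΔ_{ii}C_i)ᵀQ_i],[P_{ii}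 + Q_i(W_i + B_iΔ_{ii}C_i), −2Q_i]] ⪯ 0. -/
/-!
The subsystem certificate for block `i` is the principal submatrix of the network certificate
on the rows and columns of block `i` in both halves of `n ⊕ n`, and principal submatrices of a
positive semidefinite matrix are positive semidefinite. That this submatrix is exactly the
subsystem's certificate is where the structure enters: `Q` is diagonal and `W`, `B`, `C` are
block diagonal, so cutting out block `i` commutes with the products `Wᵀ Q`, `Q W` and `B Δ C`.
-/

open Matrix

namespace Matrix

variable {α : Type*}

theorem fromBlocks_submatrix_sum_map {l m n o l' m' n' o' : Type*}
    (A : Matrix n l α) (B : Matrix n m α) (C : Matrix o l α) (D : Matrix o m α)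
    (e : n' → n) (f : o' → o) (g : l' → l) (h : m' → m) :
    (fromBlocks A B C D).submatrix (Sum.map e f) (Sum.map g h) =
      fromBlocks (A.submatrix e g) (B.submatrix e h) (C.submatrix f g) (D.submatrix f h) := by
  ext (x | x) (y | y) <;> rfl

section IsDiag

variable [Semiring α] {l m n k : Type*} [Fintype m] [Fintype n] [DecidableEq m] [DecidableEq n]
  {D : Matrix n n α} {e : m → n}

theorem IsDiag.submatrix_mul_right (hD : D.IsDiag) (he : Function.Injective e)
    (M : Matrix l n α) (r : k → l) :
    (M * D).submatrix r e = M.submatrix r e * D.submatrix e e := by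
  rw [← hD.diagonal_diag, submatrix_diagonal _ _ he]
  ext
  simp [mul_diagonal]

theorem IsDiag.submatrix_mul_left (hD : D.IsDiag) (he : Function.Injective e)
    (M : Matrix n l α) (c : k → l) :
    (D * M).submatrix e c = D.submatrix e e * M.submatrix e c := by
  rw [← hD.diagonal_diag, submatrix_diagonal _ _ he]
  ext
  simp [diagonal_mul]

end IsDiag

@[simp]
theorem blockDiagonal'_submatrix_sigma_mk [Zero α] {o : Type*} [DecidableEq o] {m' n' : o → Type*}
    (M : ∀ i, Matrix (m' i) (n' i) α) (i : o) :
    (blockDiagonal' M).submatrix (Sigma.mk i) (Sigma.mk i) = M i := by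
  ext
  simp

section BlockDiagonal

variable [NonUnitalNonAssocSemiring α] {o : Type*} [Fintype o] [DecidableEq o]
  {m' n' : o → Type*} {l k : Type*}

theorem blockDiagonal'_mul_submatrix_sigma_mk [∀ i, Fintype (n' i)]
    (M : ∀ i, Matrix (m' i) (n' i) α) (N : Matrix (Σ i, n' i) l α) (i : o) (c : k → l) :
    (blockDiagonal' M * N).submatrix (Sigma.mk i) c = M i * N.submatrix (Sigma.mk i) c := by
  ext a b
  simp only [submatrix_apply, mul_apply, Fintype.sum_sigma]
  rw [Fintype.sum_eq_single i fun j hj => ?_]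
  · simp
  · simp [blockDiagonal'_apply_ne _ _ _ (Ne.symm hj)]

theorem mul_blockDiagonal'_submatrix_sigma_mk [∀ i, Fintype (m' i)]
    (M : ∀ i, Matrix (m' i) (n' i) α) (N : Matrix l (Σ i, m' i) α) (i : o) (r : k → l) :
    (N * blockDiagonal' M).submatrix r (Sigma.mk i) = N.submatrix r (Sigma.mk i) * M i := by
  ext a b
  simp only [submatrix_apply, mul_apply, Fintype.sum_sigma]
  rw [Fintype.sum_eq_single i fun j hj => ?_]
  · simp
  · simp [blockDiagonal'_apply_ne _ _ _ hj]

end BlockDiagonal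

end Matrix

section FiringRate

variable {R n m : Type*} [Ring R] [Fintype n] [Fintype m] [DecidableEq n] [DecidableEq m]

def firingRateLMI (M P Q : Matrix n n R) (c : R) : Matrix (n ⊕ n) (n ⊕ n) R :=
  fromBlocks ((-(2 * (1 - c))) • P) (P + Mᵀ * Q) (P + Q * M) ((-2 : R) • Q)

theorem firingRateLMI_submatrix {M P Q : Matrix n n R} (c : R) (hQ : Q.IsDiag)
    {e : m → n} (he : Function.Injective e) :
    (firingRateLMI M P Q c).submatrix (Sum.map e e) (Sum.map e e) =
      firingRateLMI (M.submatrix e e) (P.submatrix e e) (Q.submatrix e e) c := by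
  rw [firingRateLMI, firingRateLMI, fromBlocks_submatrix_sum_map, transpose_submatrix,
    ← hQ.submatrix_mul_right he, ← hQ.submatrix_mul_left he]
  rfl

end FiringRate

theorem interconnection_necessity_general
    {ι : Type*} [Fintype ι] [DecidableEq ι]
    (nn mm kk : ι → ℕ)
    (W : ∀ i, Matrix (Fin (nn i)) (Fin (nn i)) ℝ)
    (B : ∀ i, Matrix (Fin (nn i)) (Fin (mm i)) ℝ)
    (C : ∀ i, Matrix (Fin (kk i)) (Fin (nn i)) ℝ)
    (Δ : Matrix (Σ i, Fin (mm i)) (Σ i, Fin (kk i)) ℝ)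
    (P Q : Matrix (Σ i, Fin (nn i)) (Σ i, Fin (nn i)) ℝ)
    (hP : P.PosDef) (hQd : Q.IsDiag) (hQ : Q.PosDef)
    (c : ℝ)
    (hLMI : (-(fromBlocks
        ((-(2 * (1 - c))) • P)
        (P + (Matrix.blockDiagonal' W +
          Matrix.blockDiagonal' B * Δ * Matrix.blockDiagonal' C)ᵀ * Q)
        (P + Q * (Matrix.blockDiagonal' W +
          Matrix.blockDiagonal' B * Δ * Matrix.blockDiagonal' C))
        ((-2 : ℝ) • Q))).PosSemidef) :
    ∀ i : ι,
      (P.submatrix (Sigma.mk i) (Sigma.mk i)).PosDef ∧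
      (Q.submatrix (Sigma.mk i) (Sigma.mk i)).IsDiag ∧
      (Q.submatrix (Sigma.mk i) (Sigma.mk i)).PosDef ∧
      (-(fromBlocks
          ((-(2 * (1 - c))) • P.submatrix (Sigma.mk i) (Sigma.mk i))
          (P.submatrix (Sigma.mk i) (Sigma.mk i) +
            (W i + B i * Δ.submatrix (Sigma.mk i) (Sigma.mk i) * C i)ᵀ *
              Q.submatrix (Sigma.mk i) (Sigma.mk i))
          (P.submatrix (Sigma.mk i) (Sigma.mk i) +
            Q.submatrix (Sigma.mk i) (Sigma.mk i) *
              (W i + B i * Δ.submatrix (Sigma.mk i) (Sigma.mk i) * C i))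
          ((-2 : ℝ) • Q.submatrix (Sigma.mk i) (Sigma.mk i)))).PosSemidef := by
  intro i
  have he : Function.Injective (Sigma.mk (β := fun j => Fin (nn j)) i) := sigma_mk_injective
  refine ⟨hP.submatrix he, hQd.submatrix he, hQ.submatrix he, ?_⟩
  have hsub : (blockDiagonal' W + blockDiagonal' B * Δ * blockDiagonal' C).submatrix
      (Sigma.mk i) (Sigma.mk i) = W i + B i * Δ.submatrix (Sigma.mk i) (Sigma.mk i) * C i := by
    rw [← blockDiagonal'_submatrix_sigma_mk W i, ← blockDiagonal'_mul_submatrix_sigma_mk,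
      ← mul_blockDiagonal'_submatrix_sigma_mk]
    rfl
  convert hLMI.submatrix (Sum.map (Sigma.mk i) (Sigma.mk i)) using 1
  rw [← hsub]
  exact congrArg Neg.neg (firingRateLMI_submatrix c hQd he).symm

/-- Necessity of subsystem certificates in interconnections of firing-rate networks:
if the interconnected synaptic matrix `W_net = W + BΔC` (with block-diagonal `W`,
`B`, `C`) satisfies the firing-rate MONE certificate with data `(P, Q, c)`, then each
`W_i + B_i Δ_{ii} C_i` satisfies it with the corresponding diagonal blocks of `P`, `Q`. -/
theorem interconnection_necessity
    {ι : Type*} [Fintype ι] [DecidableEq ι]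
    (nn mm kk : ι → ℕ)
    (W : ∀ i, Matrix (Fin (nn i)) (Fin (nn i)) ℝ)
    (B : ∀ i, Matrix (Fin (nn i)) (Fin (mm i)) ℝ)
    (C : ∀ i, Matrix (Fin (kk i)) (Fin (nn i)) ℝ)
    (Δ : Matrix (Σ i, Fin (mm i)) (Σ i, Fin (kk i)) ℝ)
    (P Q : Matrix (Σ i, Fin (nn i)) (Σ i, Fin (nn i)) ℝ)
    (hPs : P.IsSymm) (hP : P.PosDef) (hQd : Q.IsDiag) (hQ : Q.PosDef)
    (c : ℝ)
    (hLMI : (-(fromBlocks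
        ((-(2 * (1 - c))) • P)
        (P + (Matrix.blockDiagonal' W +
          Matrix.blockDiagonal' B * Δ * Matrix.blockDiagonal' C)ᵀ * Q)
        (P + Q * (Matrix.blockDiagonal' W +
          Matrix.blockDiagonal' B * Δ * Matrix.blockDiagonal' C))
        ((-2 : ℝ) • Q))).PosSemidef) :
    ∀ i : ι,
      (P.submatrix (Sigma.mk i) (Sigma.mk i)).PosDef ∧
      (Q.submatrix (Sigma.mk i) (Sigma.mk i)).IsDiag ∧
      (Q.submatrix (Sigma.mk i) (Sigma.mk i)).PosDef ∧
      (-(fromBlocks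
          ((-(2 * (1 - c))) • P.submatrix (Sigma.mk i) (Sigma.mk i))
          (P.submatrix (Sigma.mk i) (Sigma.mk i) +
            (W i + B i * Δ.submatrix (Sigma.mk i) (Sigma.mk i) * C i)ᵀ *
              Q.submatrix (Sigma.mk i) (Sigma.mk i))
          (P.submatrix (Sigma.mk i) (Sigma.mk i) +
            Q.submatrix (Sigma.mk i) (Sigma.mk i) *
              (W i + B i * Δ.submatrix (Sigma.mk i) (Sigma.mk i) * C i))
          ((-2 : ℝ) • Q.submatrix (Sigma.mk i) (Sigma.mk i)))).PosSemidef :=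
  interconnection_necessity_general nn mm kk W B C Δ P Q hP hQd hQ c hLMI
end

section
/- Contraction certificate for Graph firing-rate neural networks via Kronecker products. Let A ∈ ℝ^{N×N} be symmetric with 0 ⪯ A ⪯ I_N (both A and I_N − A positive semidefinite). Let W ∈ ℝ^{n×n}, let P ∈ ℝ^{n×n} be symmetric positive definite and Q ∈ ℝ^{n×n} diagonal positive definite, let 0 < c < 1, and suppose: (i) [[−2(1−c)P, P + WᵀQ],[P + QW, −2Q]] ⪯ 0, and (ii) PQ⁻¹P ⪯ 4(1−c)P. Then the Kronecker product Aᵀ ⊗ W ∈ ℝ^{Nn×Nn} satisfies the continuous-time firing-rate MONE certificate with data (I_N ⊗ P, I_N ⊗ Q, c), i.e., the block matrix [[−2(1−c)(I_N ⊗ P), I_N ⊗ P + (Aᵀ ⊗ W)ᵀ(I_N ⊗ Q)],[I_N ⊗ P + (I_N ⊗ Q)(Aᵀ ⊗ W), −2(I_N ⊗ Q)]] is negative semidefinite. -/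
/-!
Since `A` is symmetric, the negated certificate matrix of `Aᵀ ⊗ W` splits blockwise as
`(I - A) ⊗ M₀ + A ⊗ M₁`, where `M₁` is the negated certificate matrix of `W` and
`M₀ = [[2(1-c)P, -P], [-P, 2Q]]`. Condition (ii) is exactly the statement that the Schur
complement of `2Q` in `M₀` is positive semidefinite, so `M₀ ⪰ 0`; with `0 ⪯ A ⪯ I`, both
summands are positive semidefinite because blockwise Kronecker products are Kronecker products
up to a permutation of the index set.
-/

open Matrix Kronecker
open scoped ComplexOrder

namespace Matrix

section BlockKronecker

variable {ι ι' m l p o R : Type*}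

theorem fromBlocks_kronecker [Mul R] (B : Matrix ι ι' R) (a : Matrix m l R) (b : Matrix m o R)
    (c : Matrix p l R) (d : Matrix p o R) :
    fromBlocks (B ⊗ₖ a) (B ⊗ₖ b) (B ⊗ₖ c) (B ⊗ₖ d) =
      (B ⊗ₖ fromBlocks a b c d).submatrix (Equiv.prodSumDistrib ι m p).symm
        (Equiv.prodSumDistrib ι' l o).symm := by
  ext (⟨i, j⟩ | ⟨i, j⟩) (⟨k, q⟩ | ⟨k, q⟩) <;> rfl

theorem PosSemidef.fromBlocks_kronecker {𝕜 : Type*} [RCLike 𝕜] [Finite ι] [Finite m]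
    [Finite p] {B : Matrix ι ι 𝕜} {a : Matrix m m 𝕜} {b : Matrix m p 𝕜} {c : Matrix p m 𝕜}
    {d : Matrix p p 𝕜} (hB : B.PosSemidef) (h : (fromBlocks a b c d).PosSemidef) :
    (fromBlocks (B ⊗ₖ a) (B ⊗ₖ b) (B ⊗ₖ c) (B ⊗ₖ d)).PosSemidef := by
  rw [Matrix.fromBlocks_kronecker]
  exact (hB.kronecker h).submatrix _

end BlockKronecker

theorem posSemidef_fromBlocks_neg_of_posSemidef_smul_sub {n : Type*} [Fintype n]
    [DecidableEq n] {P Q : Matrix n n ℝ} (hP : P.IsHermitian) (hQ : Q.PosDef) {r : ℝ}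
    (h : ((4 * r) • P - P * Q⁻¹ * P).PosSemidef) :
    (fromBlocks ((2 * r) • P) (-P) (-P) ((2 : ℝ) • Q)).PosSemidef := by
  have hQ₂ : ((2 : ℝ) • Q).PosDef := hQ.smul two_pos
  have := hQ₂.isUnit.invertible
  have hPH : (-P)ᴴ = -P := by rw [conjTranspose_neg, hP.eq]
  have hschur : (2 * r) • P - -P * ((2 : ℝ) • Q)⁻¹ * (-P)ᴴ =
      (2⁻¹ : ℝ) • ((4 * r) • P - P * Q⁻¹ * P) := by
    rw [hPH, inv_smul (A := Q) (2 : ℝ) hQ.det_pos.ne'.isUnit, invOf_eq_inv, smul_sub, smul_smul]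
    simp only [Matrix.mul_smul, Matrix.smul_mul, neg_mul, mul_neg, neg_neg]
    ring_nf
  simpa only [hPH] using (PosDef.fromBlocks₂₂ _ (-P) hQ₂).mpr (hschur ▸ h.smul (by norm_num))

theorem neg_fromBlocks_kronecker_eq_add {ι n R : Type*} [Fintype ι] [DecidableEq ι] [Fintype n]
    [CommRing R] {A : Matrix ι ι R} (hA : A.IsSymm) (W P Q : Matrix n n R) (r : R) :
    -(fromBlocks (-(2 * r) • ((1 : Matrix ι ι R) ⊗ₖ P))
        ((1 : Matrix ι ι R) ⊗ₖ P + (Aᵀ ⊗ₖ W)ᵀ * ((1 : Matrix ι ι R) ⊗ₖ Q))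
        ((1 : Matrix ι ι R) ⊗ₖ P + ((1 : Matrix ι ι R) ⊗ₖ Q) * (Aᵀ ⊗ₖ W))
        ((-2 : R) • ((1 : Matrix ι ι R) ⊗ₖ Q))) =
      fromBlocks ((1 - A) ⊗ₖ ((2 * r) • P)) ((1 - A) ⊗ₖ (-P)) ((1 - A) ⊗ₖ (-P))
          ((1 - A) ⊗ₖ ((2 : R) • Q)) +
        fromBlocks (A ⊗ₖ ((2 * r) • P)) (A ⊗ₖ (-(P + Wᵀ * Q))) (A ⊗ₖ (-(P + Q * W)))
          (A ⊗ₖ ((2 : R) • Q)) := by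
  rw [hA.eq, ← kroneckerMap_transpose, hA.eq, ← mul_kronecker_mul, ← mul_kronecker_mul,
    mul_one, one_mul, fromBlocks_neg, fromBlocks_add]
  congr 1 <;> ext ⟨i, j⟩ ⟨k, q⟩ <;>
    simp only [neg_apply, add_apply, sub_apply, smul_apply, kroneckerMap_apply, smul_eq_mul] <;>
    ring

end Matrix

theorem graph_frnn_contraction_general
    {N n : ℕ}
    (A : Matrix (Fin N) (Fin N) ℝ) (hAs : A.IsSymm)
    (hA0 : A.PosSemidef) (hA1 : ((1 : Matrix (Fin N) (Fin N) ℝ) - A).PosSemidef)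
    (W P Q : Matrix (Fin n) (Fin n) ℝ)
    (hP : P.PosDef) (hQ : Q.PosDef)
    (c : ℝ)
    (hLMI : (-(fromBlocks ((-(2 * (1 - c))) • P) (P + Wᵀ * Q) (P + Q * W)
        ((-2 : ℝ) • Q))).PosSemidef)
    (hPQ : ((4 * (1 - c)) • P - P * Q⁻¹ * P).PosSemidef) :
    (-(fromBlocks
        ((-(2 * (1 - c))) • ((1 : Matrix (Fin N) (Fin N) ℝ) ⊗ₖ P))
        ((1 : Matrix (Fin N) (Fin N) ℝ) ⊗ₖ P +
          (Aᵀ ⊗ₖ W)ᵀ * ((1 : Matrix (Fin N) (Fin N) ℝ) ⊗ₖ Q))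
        ((1 : Matrix (Fin N) (Fin N) ℝ) ⊗ₖ P +
          ((1 : Matrix (Fin N) (Fin N) ℝ) ⊗ₖ Q) * (Aᵀ ⊗ₖ W))
        ((-2 : ℝ) • ((1 : Matrix (Fin N) (Fin N) ℝ) ⊗ₖ Q)))).PosSemidef := by
  have hM₀ := posSemidef_fromBlocks_neg_of_posSemidef_smul_sub hP.isHermitian hQ hPQ
  have hM₁ : (fromBlocks ((2 * (1 - c)) • P) (-(P + Wᵀ * Q)) (-(P + Q * W))
      ((2 : ℝ) • Q)).PosSemidef := by
    simpa only [fromBlocks_neg, neg_smul, neg_neg] using hLMI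
  rw [neg_fromBlocks_kronecker_eq_add hAs]
  exact (hA1.fromBlocks_kronecker hM₀).add (hA0.fromBlocks_kronecker hM₁)

/-- Contraction certificate for graph firing-rate neural networks: if the adjacency
matrix `A` is symmetric with `0 ⪯ A ⪯ I`, and `W` satisfies the firing-rate MONE
certificate with data `(P, Q, c)` together with `PQ⁻¹P ⪯ 4(1−c)P`, then `Aᵀ ⊗ W`
satisfies the certificate with data `(I ⊗ P, I ⊗ Q, c)`. -/
theorem graph_frnn_contraction
    {N n : ℕ}
    (A : Matrix (Fin N) (Fin N) ℝ) (hAs : A.IsSymm)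
    (hA0 : A.PosSemidef) (hA1 : ((1 : Matrix (Fin N) (Fin N) ℝ) - A).PosSemidef)
    (W P Q : Matrix (Fin n) (Fin n) ℝ)
    (hPs : P.IsSymm) (hP : P.PosDef) (hQd : Q.IsDiag) (hQ : Q.PosDef)
    (c : ℝ) (hc0 : 0 < c) (hc1 : c < 1)
    (hLMI : (-(fromBlocks ((-(2 * (1 - c))) • P) (P + Wᵀ * Q) (P + Q * W)
        ((-2 : ℝ) • Q))).PosSemidef)
    (hPQ : ((4 * (1 - c)) • P - P * Q⁻¹ * P).PosSemidef) :
    (-(fromBlocks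
        ((-(2 * (1 - c))) • ((1 : Matrix (Fin N) (Fin N) ℝ) ⊗ₖ P))
        ((1 : Matrix (Fin N) (Fin N) ℝ) ⊗ₖ P +
          (Aᵀ ⊗ₖ W)ᵀ * ((1 : Matrix (Fin N) (Fin N) ℝ) ⊗ₖ Q))
        ((1 : Matrix (Fin N) (Fin N) ℝ) ⊗ₖ P +
          ((1 : Matrix (Fin N) (Fin N) ℝ) ⊗ₖ Q) * (Aᵀ ⊗ₖ W))
        ((-2 : ℝ) • ((1 : Matrix (Fin N) (Fin N) ℝ) ⊗ₖ Q)))).PosSemidef :=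
  graph_frnn_contraction_general A hAs hA0 hA1 W P Q hP hQ c hLMI hPQ
end

section
/- LMI synthesis of contracting full-state feedback for firing-rate networks. Let W ∈ ℝ^{n×n}, B ∈ ℝ^{n×m}, and fix c ∈ (0,1]. Then the following are equivalent: (i) there exist K ∈ ℝ^{m×n}, a symmetric positive definite P ∈ ℝ^{n×n}, and a diagonal positive definite Q ∈ ℝ^{n×n} such that the closed-loop matrix W + BK satisfies [[−2(1−c)P, P + (W+BK)ᵀQ],[P + Q(W+BK), −2Q]] ⪯ 0; (ii) there exist a symmetric positive definite X ∈ ℝ^{n×n}, a diagonal positive definite D ∈ ℝ^{n×n}, and Y ∈ ℝ^{m×n} such that [[−2(1−c)X, D + XWᵀ + YᵀBᵀ],[D + WX + BY, −2D]] ⪯ 0. Moreover, if (X, D, Y) satisfies the inequality in (ii), then K = YX⁻¹, P = X⁻¹, Q = D⁻¹ satisfy the inequality in (i). -/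
open Matrix

/-! The certificate is bilinear in the unknowns `(K, P, Q)` through `Q * B * K`. A congruence by the
block-diagonal matrix `diag(P⁻¹, Q⁻¹)` preserves semidefiniteness and, after the change of variables
`X = P⁻¹`, `D = Q⁻¹`, `Y = K * P⁻¹`, turns it into an inequality that is linear in `(X, D, Y)`;
this change of variables is invertible, with `K = Y * X⁻¹`. -/

section
variable {ι κ : Type*} [Fintype ι] [Fintype κ] [DecidableEq ι] [DecidableEq κ]

theorem posSemidef_neg_fromBlocks_congr_iff {A₁ : Matrix ι ι ℝ} {A₂ : Matrix ι κ ℝ}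
    {A₃ : Matrix κ ι ℝ} {A₄ : Matrix κ κ ℝ} {S : Matrix ι ι ℝ} {T : Matrix κ κ ℝ}
    (hS : IsUnit S.det) (hT : IsUnit T.det) :
    (-(fromBlocks (Sᵀ * A₁ * S) (Sᵀ * A₂ * T) (Tᵀ * A₃ * S) (Tᵀ * A₄ * T))).PosSemidef ↔
      (-(fromBlocks A₁ A₂ A₃ A₄)).PosSemidef := by
  have hU : IsUnit (fromBlocks S 0 0 T) := by
    rw [isUnit_iff_isUnit_det, det_fromBlocks_zero₂₁]
    exact hS.mul hT
  refine (Iff.of_eq ?_).trans hU.posSemidef_star_left_conjugate_iff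
  rw [star_eq_conjTranspose, conjTranspose_eq_transpose_of_trivial, fromBlocks_transpose]
  simp [fromBlocks_multiply, Matrix.mul_assoc, fromBlocks_neg]

end

section
variable {n : Type*} [Fintype n] [DecidableEq n]

theorem posSemidef_neg_fromBlocks_inv_iff {X D A : Matrix n n ℝ} (hX : X.IsSymm)
    (hXu : IsUnit X.det) (hD : D.IsSymm) (hDu : IsUnit D.det) (a b : ℝ) :
    (-(fromBlocks (a • X⁻¹) (X⁻¹ + Aᵀ * D⁻¹) (X⁻¹ + D⁻¹ * A) (b • D⁻¹))).PosSemidef ↔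
      (-(fromBlocks (a • X) (D + X * Aᵀ) (D + A * X) (b • D))).PosSemidef := by
  -- congruence by `diag(X⁻¹, D⁻¹)`
  refine (Iff.of_eq ?_).trans (posSemidef_neg_fromBlocks_congr_iff
    (isUnit_nonsing_inv_det X hXu) (isUnit_nonsing_inv_det D hDu))
  simp only [hX.inv.eq, hD.inv.eq, Matrix.mul_add, Matrix.add_mul, Matrix.mul_smul,
    Matrix.smul_mul, Matrix.mul_assoc, mul_nonsing_inv _ hXu, mul_nonsing_inv _ hDu, Matrix.mul_one,
    nonsing_inv_mul_cancel_left _ _ hXu, nonsing_inv_mul_cancel_left _ _ hDu]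

theorem posSemidef_neg_fromBlocks_feedback_iff {m : Type*} [Fintype m] (W : Matrix n n ℝ)
    (B : Matrix n m ℝ) (Y : Matrix m n ℝ) {X D : Matrix n n ℝ} (hX : X.IsSymm) (hXu : IsUnit X.det)
    (hD : D.IsSymm) (hDu : IsUnit D.det) (a b : ℝ) :
    (-(fromBlocks (a • X⁻¹) (X⁻¹ + (W + B * (Y * X⁻¹))ᵀ * D⁻¹)
        (X⁻¹ + D⁻¹ * (W + B * (Y * X⁻¹))) (b • D⁻¹))).PosSemidef ↔
      (-(fromBlocks (a • X) (D + X * Wᵀ + Yᵀ * Bᵀ) (D + W * X + B * Y) (b • D))).PosSemidef := by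
  have hXA : X * (W + B * (Y * X⁻¹))ᵀ = X * Wᵀ + Yᵀ * Bᵀ := by
    rw [transpose_add, transpose_mul, transpose_mul, hX.inv.eq, Matrix.mul_add, Matrix.mul_assoc,
      mul_nonsing_inv_cancel_left _ _ hXu]
  have hAX : (W + B * (Y * X⁻¹)) * X = W * X + B * Y := by
    rw [Matrix.add_mul, Matrix.mul_assoc, Matrix.mul_assoc, nonsing_inv_mul _ hXu, Matrix.mul_one]
  rw [posSemidef_neg_fromBlocks_inv_iff hX hXu hD hDu, hXA, hAX, ← add_assoc, ← add_assoc]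

end

theorem Matrix.IsDiag.inv {n α : Type*} [Fintype n] [DecidableEq n] [CommRing α]
    {A : Matrix n n α} (hA : A.IsDiag) : A⁻¹.IsDiag := by
  rw [← hA.diagonal_diag, inv_diagonal]
  exact isDiag_diagonal _

theorem state_feedback_synthesis_general
    {n m : ℕ} (W : Matrix (Fin n) (Fin n) ℝ) (B : Matrix (Fin n) (Fin m) ℝ)
    (c : ℝ) :
    ((∃ (K : Matrix (Fin m) (Fin n) ℝ) (P Q : Matrix (Fin n) (Fin n) ℝ),
        P.IsSymm ∧ P.PosDef ∧ Q.IsDiag ∧ Q.PosDef ∧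
        (-(fromBlocks ((-(2 * (1 - c))) • P) (P + (W + B * K)ᵀ * Q)
          (P + Q * (W + B * K)) ((-2 : ℝ) • Q))).PosSemidef) ↔
      (∃ (X D : Matrix (Fin n) (Fin n) ℝ) (Y : Matrix (Fin m) (Fin n) ℝ),
        X.IsSymm ∧ X.PosDef ∧ D.IsDiag ∧ D.PosDef ∧
        (-(fromBlocks ((-(2 * (1 - c))) • X) (D + X * Wᵀ + Yᵀ * Bᵀ)
          (D + W * X + B * Y) ((-2 : ℝ) • D))).PosSemidef)) ∧
    (∀ (X D : Matrix (Fin n) (Fin n) ℝ) (Y : Matrix (Fin m) (Fin n) ℝ),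
      X.IsSymm → X.PosDef → D.IsDiag → D.PosDef →
      (-(fromBlocks ((-(2 * (1 - c))) • X) (D + X * Wᵀ + Yᵀ * Bᵀ)
        (D + W * X + B * Y) ((-2 : ℝ) • D))).PosSemidef →
      (-(fromBlocks ((-(2 * (1 - c))) • X⁻¹)
        (X⁻¹ + (W + B * (Y * X⁻¹))ᵀ * D⁻¹)
        (X⁻¹ + D⁻¹ * (W + B * (Y * X⁻¹)))
        ((-2 : ℝ) • D⁻¹))).PosSemidef) := by
  have hu {M : Matrix (Fin n) (Fin n) ℝ} (hM : M.PosDef) : IsUnit M.det := hM.det_pos.ne'.isUnit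
  have synthesis_iff {X D : Matrix (Fin n) (Fin n) ℝ} (Y : Matrix (Fin m) (Fin n) ℝ)
      (hX : X.IsSymm) (hXp : X.PosDef) (hD : D.IsDiag) (hDp : D.PosDef) :=
    posSemidef_neg_fromBlocks_feedback_iff W B Y hX (hu hXp) hD.isSymm (hu hDp)
      (-(2 * (1 - c))) (-2)
  refine ⟨⟨?_, ?_⟩, fun X D Y hX hXp hD hDp ↦ (synthesis_iff Y hX hXp hD hDp).mpr⟩
  · rintro ⟨K, P, Q, hP, hPp, hQ, hQp, h⟩
    refine ⟨P⁻¹, Q⁻¹, K * P⁻¹, hP.inv, hPp.inv, hQ.inv, hQp.inv, ?_⟩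
    rw [← synthesis_iff _ hP.inv hPp.inv hQ.inv hQp.inv, nonsing_inv_nonsing_inv _ (hu hPp),
      nonsing_inv_nonsing_inv _ (hu hQp), Matrix.mul_assoc, nonsing_inv_mul _ (hu hPp),
      Matrix.mul_one]
    exact h
  · rintro ⟨X, D, Y, hX, hXp, hD, hDp, h⟩
    exact ⟨Y * X⁻¹, X⁻¹, D⁻¹, hX.inv, hXp.inv, hD.inv, hDp.inv,
      (synthesis_iff Y hX hXp hD hDp).mpr h⟩

/-- LMI synthesis of contracting full-state feedback for firing-rate networks:
the existence of a feedback gain `K` making `W + BK` satisfy the firing-rate MONE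
certificate is equivalent to the feasibility of a synthesis LMI; moreover any
feasible `(X, D, Y)` yields `K = YX⁻¹`, `P = X⁻¹`, `Q = D⁻¹`. -/
theorem state_feedback_synthesis
    {n m : ℕ} (W : Matrix (Fin n) (Fin n) ℝ) (B : Matrix (Fin n) (Fin m) ℝ)
    (c : ℝ) (hc0 : 0 < c) (hc1 : c ≤ 1) :
    ((∃ (K : Matrix (Fin m) (Fin n) ℝ) (P Q : Matrix (Fin n) (Fin n) ℝ),
        P.IsSymm ∧ P.PosDef ∧ Q.IsDiag ∧ Q.PosDef ∧
        (-(fromBlocks ((-(2 * (1 - c))) • P) (P + (W + B * K)ᵀ * Q)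
          (P + Q * (W + B * K)) ((-2 : ℝ) • Q))).PosSemidef) ↔
      (∃ (X D : Matrix (Fin n) (Fin n) ℝ) (Y : Matrix (Fin m) (Fin n) ℝ),
        X.IsSymm ∧ X.PosDef ∧ D.IsDiag ∧ D.PosDef ∧
        (-(fromBlocks ((-(2 * (1 - c))) • X) (D + X * Wᵀ + Yᵀ * Bᵀ)
          (D + W * X + B * Y) ((-2 : ℝ) • D))).PosSemidef)) ∧
    (∀ (X D : Matrix (Fin n) (Fin n) ℝ) (Y : Matrix (Fin m) (Fin n) ℝ),
      X.IsSymm → X.PosDef → D.IsDiag → D.PosDef →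
      (-(fromBlocks ((-(2 * (1 - c))) • X) (D + X * Wᵀ + Yᵀ * Bᵀ)
        (D + W * X + B * Y) ((-2 : ℝ) • D))).PosSemidef →
      (-(fromBlocks ((-(2 * (1 - c))) • X⁻¹)
        (X⁻¹ + (W + B * (Y * X⁻¹))ᵀ * D⁻¹)
        (X⁻¹ + D⁻¹ * (W + B * (Y * X⁻¹)))
        ((-2 : ℝ) • D⁻¹))).PosSemidef) :=
  state_feedback_synthesis_general W B c
end

section
/- Necessity of linear stabilizability for contraction by full-state feedback. Let W ∈ ℝ^{n×n} and B ∈ ℝ^{n×m}. If there exist K ∈ ℝ^{m×n}, a symmetric positive definite P ∈ ℝ^{n×n}, a diagonal positive definite Q ∈ ℝ^{n×n}, and c > 0 such that [[−2(1−c)P, P + (W+BK)ᵀQ],[P + Q(W+BK), −2Q]] ⪯ 0, then there exist K′ ∈ ℝ^{m×n} and a symmetric positive definite X ∈ ℝ^{n×n} such that (W − Iₙ + BK′)X + X(W − Iₙ + BK′)ᵀ is negative definite (i.e., the pair (W − Iₙ, B) is stabilizable). -/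
/-!
Compressing the LMI with the congruence `[I; I]` adds up its four blocks and leaves
`(A - I)ᵀ Q + Q (A - I) ⪯ -2cP ≺ 0` for `A = W + BK`, a Lyapunov inequality for `A - I`.
Congruence by `Q⁻¹` turns it into the dual inequality `(A - I) Q⁻¹ + Q⁻¹ (A - I)ᵀ ≺ 0`, so
`K' = K` and `X = Q⁻¹` witness stabilizability.
-/

open Matrix

namespace Matrix

variable {ι : Type*} [Fintype ι] [DecidableEq ι]

theorem PosSemidef.add_add_add_of_fromBlocks {R : Type*} [Ring R] [PartialOrder R] [StarRing R]
    {A B C D : Matrix ι ι R} (h : (fromBlocks A B C D).PosSemidef) :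
    (A + B + C + D).PosSemidef := by
  have hJ : (fromRows (1 : Matrix ι ι R) (1 : Matrix ι ι R))ᴴ = fromCols 1 1 := by
    rw [conjTranspose_fromRows_eq_fromCols_conjTranspose, conjTranspose_one]
  simpa [hJ, fromBlocks_mul_fromRows, fromCols_mul_fromRows, Matrix.mul_assoc, add_assoc]
    using h.conjTranspose_mul_mul_same (fromRows (1 : Matrix ι ι R) (1 : Matrix ι ι R))

theorem PosDef.neg_lyapunov_dual {K : Type*} [Field K] [PartialOrder K] [StarRing K]
    {M Q : Matrix ι ι K} (hQ : Q.PosDef) (h : (-(Mᴴ * Q + Q * M)).PosDef) :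
    (-(M * Q⁻¹ + Q⁻¹ * Mᴴ)).PosDef := by
  have : Invertible Q := hQ.isUnit.invertible
  have hQinv : (Q⁻¹)ᴴ = Q⁻¹ := hQ.inv.isHermitian.eq
  have hinj : Function.Injective (Q⁻¹).mulVec := by
    simp [mulVec_injective_iff_isUnit, hQ.isUnit]
  convert h.conjTranspose_mul_mul_same hinj using 1
  rw [hQinv]
  simp only [Matrix.mul_neg, Matrix.neg_mul, Matrix.mul_add, Matrix.add_mul, ← Matrix.mul_assoc,
    inv_mul_of_invertible, Matrix.one_mul]
  simp only [Matrix.mul_assoc, mul_inv_of_invertible, Matrix.mul_one]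
  abel

end Matrix

theorem neg_lyapunov_sub_one_posDef_of_mone_lmi {ι : Type*} [Fintype ι] [DecidableEq ι]
    {A P Q : Matrix ι ι ℝ} {c : ℝ} (hP : P.PosDef) (hc : 0 < c)
    (hLMI : (-(fromBlocks ((-(2 * (1 - c))) • P) (P + Aᵀ * Q)
      (P + Q * A) ((-2 : ℝ) • Q))).PosSemidef) :
    (-((A - 1)ᵀ * Q + Q * (A - 1))).PosDef := by
  rw [fromBlocks_neg] at hLMI
  convert PosDef.posSemidef_add hLMI.add_add_add_of_fromBlocks
    (hP.smul (by positivity : (0 : ℝ) < 2 * c)) using 1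
  simp only [transpose_sub, transpose_one, Matrix.sub_mul, Matrix.mul_sub, Matrix.one_mul,
    Matrix.mul_one]
  module

theorem stabilizability_necessary_general
    {n m : ℕ} (W : Matrix (Fin n) (Fin n) ℝ) (B : Matrix (Fin n) (Fin m) ℝ)
    (K : Matrix (Fin m) (Fin n) ℝ) (P Q : Matrix (Fin n) (Fin n) ℝ) (c : ℝ)
    (hP : P.PosDef) (hQ : Q.PosDef) (hc : 0 < c)
    (hLMI : (-(fromBlocks ((-(2 * (1 - c))) • P) (P + (W + B * K)ᵀ * Q)
      (P + Q * (W + B * K)) ((-2 : ℝ) • Q))).PosSemidef) :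
    ∃ (K' : Matrix (Fin m) (Fin n) ℝ) (X : Matrix (Fin n) (Fin n) ℝ),
      X.IsSymm ∧ X.PosDef ∧
      (-((W - 1 + B * K') * X + X * (W - 1 + B * K')ᵀ)).PosDef := by
  have hLyap := neg_lyapunov_sub_one_posDef_of_mone_lmi hP hc hLMI
  rw [← conjTranspose_eq_transpose_of_trivial] at hLyap
  refine ⟨K, Q⁻¹, isHermitian_iff_isSymm.mp hQ.inv.isHermitian, hQ.inv, ?_⟩
  rw [← conjTranspose_eq_transpose_of_trivial, show W - 1 + B * K = W + B * K - 1 by abel]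
  exact hQ.neg_lyapunov_dual hLyap

/-- Necessity of linear stabilizability: if some gain `K` makes `W + BK` satisfy the
continuous-time firing-rate MONE certificate with rate `c > 0`, then the pair
`(W − Iₙ, B)` is stabilizable in the Lyapunov sense. -/
theorem stabilizability_necessary
    {n m : ℕ} (W : Matrix (Fin n) (Fin n) ℝ) (B : Matrix (Fin n) (Fin m) ℝ)
    (K : Matrix (Fin m) (Fin n) ℝ) (P Q : Matrix (Fin n) (Fin n) ℝ) (c : ℝ)
    (hPs : P.IsSymm) (hP : P.PosDef) (hQd : Q.IsDiag) (hQ : Q.PosDef) (hc : 0 < c)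
    (hLMI : (-(fromBlocks ((-(2 * (1 - c))) • P) (P + (W + B * K)ᵀ * Q)
      (P + Q * (W + B * K)) ((-2 : ℝ) • Q))).PosSemidef) :
    ∃ (K' : Matrix (Fin m) (Fin n) ℝ) (X : Matrix (Fin n) (Fin n) ℝ),
      X.IsSymm ∧ X.PosDef ∧
      (-((W - 1 + B * K') * X + X * (W - 1 + B * K')ᵀ)).PosDef :=
  stabilizability_necessary_general W B K P Q c hP hQ hc hLMI
end

section
/- Local Lipschitz continuity of the equilibrium map of input-dependent firing-rate networks. Let (U, ‖·‖) be a normed real vector space, let Ψ : ℝⁿ → ℝⁿ be a diagonal MONE map, and let W : U → ℝ^{n×n} and B : U → ℝⁿ be globally Lipschitz with constants ℓ_W (with respect to the operator norm on ℝ^{n×n} induced by the Euclidean norm) and ℓ_B (with respect to the Euclidean norm), respectively. Suppose there exist a diagonal positive definite matrix Q ∈ ℝ^{n×n} and δ > 0 such that QW(u) + W(u)ᵀQ ⪯ 2Q − 2δIₙ for every u ∈ U, and let x* : U → ℝⁿ satisfy x*(u) = Ψ(W(u)x*(u) + B(u)) for all u ∈ U. Then for all u, u′ ∈ U, ‖x*(u)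 − x*(u′)‖ ≤ (‖Q‖/δ)(ℓ_W‖x*(u′)‖ + ℓ_B)‖u − u′‖, where ‖·‖ on ℝⁿ is the Euclidean norm and ‖Q‖ is the operator (spectral) norm of Q. In particular, x* is locally Lipschitz on U. -/
open Matrix

/-! For two inputs put `d = x*(u) - x*(u')`. Monotonicity and non-expansiveness of each `ψᵢ`
give `dᵢ² ≤ dᵢ (yᵢ - y'ᵢ)` for the pre-activations `y, y'`, and `y - y' = W(u) d + c` with
`‖c‖ ≤ (ℓ_W ‖x*(u')‖ + ℓ_B) ‖u - u'‖`. Weighting these inequalities by the positive diagonal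
of `Q` and subtracting the Lyapunov inequality for `W(u)` leaves `δ ‖d‖² ≤ ⟪d, Q c⟫`, whence
`δ ‖d‖ ≤ ‖Q‖ ‖c‖`. A bound that is affine in `‖x*(u')‖` is locally uniform, which gives local
Lipschitz continuity. -/

theorem sq_sub_le_mul_sub_of_slope {φ : ℝ → ℝ} {s t : ℝ} (h₀ : 0 ≤ (φ s - φ t) * (s - t))
    (h₁ : (φ s - φ t) * (s - t) ≤ (s - t) ^ 2) : (φ s - φ t) ^ 2 ≤ (φ s - φ t) * (s - t) := by
  rcases eq_or_ne s t with rfl | hst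
  · simp
  have hq : 0 < (s - t) ^ 2 := by positivity
  nlinarith [mul_le_mul_of_nonneg_left h₁ h₀]

theorem sq_sub_apply_le_of_slope {ι : Type*} {Ψ : EuclideanSpace ℝ ι → EuclideanSpace ℝ ι}
    {ψ : ι → ℝ → ℝ} (hdiag : ∀ x i, Ψ x i = ψ i (x i))
    (hslope : ∀ i s t, 0 ≤ (ψ i s - ψ i t) * (s - t) ∧ (ψ i s - ψ i t) * (s - t) ≤ (s - t) ^ 2)
    {x x' y y' : EuclideanSpace ℝ ι} (hx : x = Ψ y) (hx' : x' = Ψ y') (i : ι) :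
    (x - x') i ^ 2 ≤ (x - x') i * (y - y') i := by
  obtain ⟨h₀, h₁⟩ := hslope i (y i) (y' i)
  simpa [hx, hx', hdiag] using sq_sub_le_mul_sub_of_slope h₀ h₁

theorem Matrix.IsDiag.dotProduct_mulVec_le_of_sq_le {ι R : Type*} [Fintype ι] [DecidableEq ι]
    [CommRing R] [LinearOrder R] [IsStrictOrderedRing R] {Q : Matrix ι ι R} (hQd : Q.IsDiag)
    (hQ : ∀ i, 0 ≤ Q i i) {d e : ι → R} (h : ∀ i, d i ^ 2 ≤ d i * e i) :
    d ⬝ᵥ Q *ᵥ d ≤ d ⬝ᵥ Q *ᵥ e := by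
  rw [← hQd.diagonal_diag]
  simp only [dotProduct, mulVec_diagonal, diag_apply]
  refine Finset.sum_le_sum fun i _ => ?_
  nlinarith [mul_le_mul_of_nonneg_left (h i) (hQ i)]

theorem dotProduct_mulVec_mulVec_add_le_of_lyapunov {ι : Type*} [Fintype ι] [DecidableEq ι]
    {Q A : Matrix ι ι ℝ} (hQ : Q.IsSymm) {δ : ℝ}
    (hLDS : ((2 : ℝ) • Q - (2 * δ) • (1 : Matrix ι ι ℝ) - (Q * A + Aᵀ * Q)).PosSemidef)
    (d : ι → ℝ) : d ⬝ᵥ Q *ᵥ (A *ᵥ d) + δ * (d ⬝ᵥ d) ≤ d ⬝ᵥ Q *ᵥ d := by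
  have hsymm : d ⬝ᵥ Aᵀ *ᵥ (Q *ᵥ d) = d ⬝ᵥ Q *ᵥ (A *ᵥ d) := by
    rw [dotProduct_mulVec, vecMul_transpose, dotProduct_comm, ← vecMul_transpose, hQ.eq,
      ← dotProduct_mulVec]
  have h := hLDS.dotProduct_mulVec_nonneg d
  simp only [star_trivial, sub_mulVec, add_mulVec, smul_mulVec, one_mulVec, dotProduct_sub,
    dotProduct_add, dotProduct_smul, smul_eq_mul, ← mulVec_mulVec, hsymm] at h
  linarith

open scoped RealInnerProductSpace in
theorem mul_norm_le_of_lyapunov {ι : Type*} [Fintype ι] [DecidableEq ι]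
    {Q A : Matrix ι ι ℝ} (hQd : Q.IsDiag) (hQ : Q.PosSemidef) {δ : ℝ}
    (hLDS : ((2 : ℝ) • Q - (2 * δ) • (1 : Matrix ι ι ℝ) - (Q * A + Aᵀ * Q)).PosSemidef)
    {d c : EuclideanSpace ℝ ι} (h : ∀ i, d i ^ 2 ≤ d i * (toEuclideanCLM (𝕜 := ℝ) A d + c) i) :
    δ * ‖d‖ ≤ ‖toEuclideanCLM (𝕜 := ℝ) Q‖ * ‖c‖ := by
  have hnorm : ‖d‖ ^ 2 = d ⬝ᵥ d := by
    rw [← real_inner_self_eq_norm_sq, EuclideanSpace.inner_eq_star_dotProduct, star_trivial]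
  have hweighted := hQd.dotProduct_mulVec_le_of_sq_le (fun _ => hQ.diag_nonneg) h
  have hlyap := dotProduct_mulVec_mulVec_add_le_of_lyapunov hQd.isSymm hLDS d
  have hsq : δ * ‖d‖ ^ 2 ≤ ⟪d, toEuclideanCLM (𝕜 := ℝ) Q c⟫ := by
    simp only [WithLp.ofLp_add, ofLp_toEuclideanCLM, mulVec_add, dotProduct_add] at hweighted
    rw [inner_toEuclideanCLM, hnorm]
    linarith
  have hcs : ⟪d, toEuclideanCLM (𝕜 := ℝ) Q c⟫ ≤ ‖d‖ * (‖toEuclideanCLM (𝕜 := ℝ) Q‖ * ‖c‖) :=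
    (real_inner_le_norm _ _).trans (by gcongr; exact ContinuousLinearMap.le_opNorm _ _)
  rcases (norm_nonneg d).eq_or_lt with hd | hd
  · rw [← hd, mul_zero]; positivity
  · nlinarith

theorem locallyLipschitz_of_norm_sub_le {E F : Type*} [SeminormedAddCommGroup E]
    [SeminormedAddCommGroup F] {f : E → F} {a b : ℝ}
    (h : ∀ u u', ‖f u - f u'‖ ≤ (a * ‖f u'‖ + b) * ‖u - u'‖) : LocallyLipschitz f := by
  intro u₀
  set R := ‖f u₀‖ + |a * ‖f u₀‖ + b|
  have hbound : ∀ v ∈ Metric.ball u₀ 1, ‖f v‖ ≤ R := fun v hv => by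
    have hv : ‖v - u₀‖ ≤ 1 := (mem_ball_iff_norm.mp hv).le
    calc ‖f v‖ ≤ ‖f u₀‖ + ‖f v - f u₀‖ := norm_le_insert' _ _
      _ ≤ ‖f u₀‖ + |a * ‖f u₀‖ + b| * 1 := by
        gcongr
        exact (h v u₀).trans (mul_le_mul (le_abs_self _) hv (norm_nonneg _) (abs_nonneg _))
      _ = R := by rw [mul_one]
  refine ⟨⟨|a| * R + |b|, by positivity⟩, Metric.ball u₀ 1, Metric.ball_mem_nhds u₀ one_pos,
    LipschitzOnWith.of_dist_le_mul fun v _ w hw => ?_⟩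
  rw [dist_eq_norm, dist_eq_norm]
  refine (h v w).trans (mul_le_mul_of_nonneg_right ?_ (norm_nonneg _))
  calc a * ‖f w‖ + b ≤ |a| * ‖f w‖ + |b| := by
        gcongr
        · exact le_abs_self a
        · exact le_abs_self b
    _ ≤ |a| * R + |b| := by gcongr; exact hbound w hw

/-- Local Lipschitz continuity of the equilibrium map of input-dependent
firing-rate networks. Operator norms of matrices (induced by the Euclidean norm)
are expressed via `Matrix.toEuclideanCLM`. -/
theorem equilibrium_map_locally_lipschitz
    {n : ℕ} {U : Type*} [NormedAddCommGroup U] [NormedSpace ℝ U]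
    (Ψ : EuclideanSpace ℝ (Fin n) → EuclideanSpace ℝ (Fin n)) (ψ : Fin n → ℝ → ℝ)
    -- Ψ is diagonal with components ψ i
    (hdiag : ∀ (x : EuclideanSpace ℝ (Fin n)) (i : Fin n), Ψ x i = ψ i (x i))
    -- MONE: each component is slope-restricted in [0,1]
    (hslope : ∀ (i : Fin n) (s t : ℝ),
      0 * (s - t)^2 ≤ (ψ i s - ψ i t) * (s - t) ∧ (ψ i s - ψ i t) * (s - t) ≤ 1 * (s - t)^2)
    (W : U → Matrix (Fin n) (Fin n) ℝ) (B : U → EuclideanSpace ℝ (Fin n))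
    (ℓW ℓB : ℝ)
    -- W is ℓW-Lipschitz in the operator norm induced by the Euclidean norm
    (hW : ∀ u u' : U,
      ‖Matrix.toEuclideanCLM (𝕜 := ℝ) (W u) - Matrix.toEuclideanCLM (𝕜 := ℝ) (W u')‖ ≤
        ℓW * ‖u - u'‖)
    -- B is ℓB-Lipschitz in the Euclidean norm
    (hB : ∀ u u' : U, ‖B u - B u'‖ ≤ ℓB * ‖u - u'‖)
    (Q : Matrix (Fin n) (Fin n) ℝ) (hQd : Q.IsDiag) (hQ : Q.PosDef)
    (δ : ℝ) (hδ : 0 < δ)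
    -- QW(u) + W(u)ᵀQ ⪯ 2Q − 2δIₙ uniformly in u
    (hLDS : ∀ u : U, ((2 : ℝ) • Q - (2 * δ) • (1 : Matrix (Fin n) (Fin n) ℝ) -
      (Q * W u + (W u)ᵀ * Q)).PosSemidef)
    -- x* is the equilibrium map
    (xs : U → EuclideanSpace ℝ (Fin n))
    (hxs : ∀ u : U, xs u = Ψ (Matrix.toEuclideanCLM (𝕜 := ℝ) (W u) (xs u) + B u)) :
    (∀ u u' : U,
      ‖xs u - xs u'‖ ≤
        (‖Matrix.toEuclideanCLM (𝕜 := ℝ) Q‖ / δ) * (ℓW * ‖xs u'‖ + ℓB) * ‖u - u'‖) ∧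
    LocallyLipschitz xs := by
  set M : U → EuclideanSpace ℝ (Fin n) →L[ℝ] EuclideanSpace ℝ (Fin n) := fun u =>
    Matrix.toEuclideanCLM (𝕜 := ℝ) (W u)
  have hest : ∀ u u', ‖xs u - xs u'‖ ≤
      (‖Matrix.toEuclideanCLM (𝕜 := ℝ) Q‖ / δ) * (ℓW * ‖xs u'‖ + ℓB) * ‖u - u'‖ := by
    intro u u'
    set c := (M u - M u') (xs u') + (B u - B u')
    have hc : ‖c‖ ≤ (ℓW * ‖xs u'‖ + ℓB) * ‖u - u'‖ :=
      calc ‖c‖ ≤ ‖M u - M u'‖ * ‖xs u'‖ + ‖B u - B u'‖ :=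
            (norm_add_le _ _).trans (by gcongr; exact (M u - M u').le_opNorm _)
        _ ≤ ℓW * ‖u - u'‖ * ‖xs u'‖ + ℓB * ‖u - u'‖ := by gcongr; exacts [hW u u', hB u u']
        _ = (ℓW * ‖xs u'‖ + ℓB) * ‖u - u'‖ := by ring
    have hpre : M u (xs u - xs u') + c = (M u (xs u) + B u) - (M u' (xs u') + B u') := by
      simp only [c, map_sub, _root_.sub_apply]; abel
    have hinc : ∀ i, (xs u - xs u') i ^ 2 ≤ (xs u - xs u') i * (M u (xs u - xs u') + c) i :=
      hpre ▸ sq_sub_apply_le_of_slope hdiag (fun i s t => by simpa using hslope i s t)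
        (hxs u) (hxs u')
    have hδd := mul_norm_le_of_lyapunov hQd hQ.posSemidef (hLDS u) hinc
    rw [div_mul_eq_mul_div, div_mul_eq_mul_div, le_div_iff₀ hδ, mul_comm]
    calc δ * ‖xs u - xs u'‖ ≤ ‖Matrix.toEuclideanCLM (𝕜 := ℝ) Q‖ * ‖c‖ := hδd
      _ ≤ _ := by rw [mul_assoc]; gcongr
  set C := ‖Matrix.toEuclideanCLM (𝕜 := ℝ) Q‖ / δ
  exact ⟨hest, locallyLipschitz_of_norm_sub_le (a := C * ℓW) (b := C * ℓB)
    fun u u' => (hest u u').trans_eq (by ring)⟩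
end
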